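/- arXiv:2507.12699 — 9 statements merged into one kernel-verified Lean document; each statement's English description precedes it below -/
import Mathlib

section
/- Let x⁰ ∈ (0,1)^{Ψ⁰} be a fixed vector of monomer concentrations and let x ∈ (0,1)^Ψ satisfy A·x = x⁰. If every reaction M₁ → M₂ is balanced at x, then g(x) ≤ g(x') for every x' ∈ (0,1)^Ψ with A·x' = x⁰ (i.e., x minimizes the cost function g subject to the mass-conservation constraint). -/
open scoped BigOperators

section ModelDefs

variable {Ψ₀ Ψ : Type*} [Fintype Ψ₀] [Fintype Ψ]

/-- `M₁` and `M₂` (multisets of polymers, given by counting functions `Ψ → ℕ`)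
are reconfigurations of each other: every monomer has the same total count. -/
def reconfig (pol : Ψ → Ψ₀ → ℕ) (M₁ M₂ : Ψ → ℕ) : Prop :=
  ∀ m : Ψ₀, ∑ P, M₁ P * pol P m = ∑ P, M₂ P * pol P m

/-- A multiset of polymers is supported on a set `S` of polymers (i.e. `M ∈ ℕ^S`). -/
def supportedOn (S : Set Ψ) (M : Ψ → ℕ) : Prop := ∀ P ∉ S, M P = 0

/-- The reaction `M₁ → M₂` is balanced at the configuration `x`. -/
def balancedAt (x : Ψ → ℝ) (M₁ M₂ : Ψ → ℕ) : Prop :=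
  ∏ P, x P ^ M₁ P = ∏ P, x P ^ M₂ P

/-- The vector `A · x` of monomer concentrations induced by polymer concentrations `x`. -/
def massVec (pol : Ψ → Ψ₀ → ℕ) (x : Ψ → ℝ) : Ψ₀ → ℝ :=
  fun m => ∑ P, (pol P m : ℝ) * x P

/-- The cost function `g(x) = Σ_P x_P (log x_P - 1)`. -/
noncomputable def gCost (x : Ψ → ℝ) : ℝ := ∑ P, x P * (Real.log (x P) - 1)

/-- The concentration exponent `μ(M) = Σ_P M(P)·μ(P)` of a multiset of polymers. -/
noncomputable def muSum (μ : Ψ → ℝ) (M : Ψ → ℕ) : ℝ := ∑ P, (M P : ℝ) * μ P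

/-- `S ⊆ Ψ` with `μ : S → (0,1]` is on-target. -/
def onTarget (pol : Ψ → Ψ₀ → ℕ) (S : Set Ψ) (μ : Ψ → ℝ) : Prop :=
  (∀ P ∈ S, 0 < μ P ∧ μ P ≤ 1) ∧
  (∀ P : Ψ, ∃ M M' : Ψ → ℕ, supportedOn S M ∧ 1 ≤ M' P ∧ reconfig pol M M') ∧
  (∀ M₁ M₂ : Ψ → ℕ, supportedOn S M₁ → supportedOn S M₂ → reconfig pol M₁ M₂ →
    muSum μ M₁ = muSum μ M₂)

/-- The imbalance `k_U(α) = μ(M₁) - Σ_{P ∈ U} M₂(P)·ν(P)` of a canonical reaction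
`α : M₁ → M₂` relative to a set `U ⊇ S` with exponents `ν` (with `ν = μ` on `S`). -/
noncomputable def imbalance (U : Set Ψ) (μ ν : Ψ → ℝ) (M₁ M₂ : Ψ → ℕ) : ℝ :=
  muSum μ M₁ - ∑ P, U.indicator (fun Q => (M₂ Q : ℝ) * ν Q) P

/-- The novelty `l_U(α) = Σ_{P ∉ U} M₂(P)` of a canonical reaction `α : M₁ → M₂`. -/
noncomputable def novelty (U : Set Ψ) (M₂ : Ψ → ℕ) : ℕ :=
  ∑ P, Uᶜ.indicator M₂ P

/-- `S` with `μ` is stable: every canonical reaction `α` with `l(α) ≠ 0`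
has `k(α)/l(α) > 1`. -/
def stableSet (pol : Ψ → Ψ₀ → ℕ) (S : Set Ψ) (μ : Ψ → ℝ) : Prop :=
  ∀ M₁ M₂ : Ψ → ℕ, supportedOn S M₁ → reconfig pol M₁ M₂ → novelty S M₂ ≠ 0 →
    1 < imbalance S μ μ M₁ M₂ / (novelty S M₂ : ℝ)

end ModelDefs

lemma rat_clear_den' (q : ℚ) (n : ℕ) (h : q.den ∣ n) : ∃ z : ℤ, (z : ℚ) = n * q := by
  obtain ⟨k, hk⟩ := h
  refine ⟨q.num * k, ?_⟩
  have hden : (q.den : ℚ) ≠ 0 := by exact_mod_cast q.den_nz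
  have hq : (q.den : ℚ) * q = q.num := by
    have h2 := Rat.num_div_den q
    rw [div_eq_iff hden] at h2
    rw [h2]; ring
  push_cast [hk]
  rw [mul_assoc, mul_comm (k:ℚ) q, ← mul_assoc, hq]

lemma pt_ineq' {a b : ℝ} (ha : 0 < a) (hb : 0 < b) :
    (b - a) * Real.log a ≤ b * (Real.log b - 1) - a * (Real.log a - 1) := by
  have h := Real.log_le_sub_one_of_pos (div_pos ha hb)
  rw [Real.log_div ha.ne' hb.ne'] at h
  have h2 : b * (Real.log a - Real.log b) ≤ a - b := by
    have := mul_le_mul_of_nonneg_left h hb.le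
    calc b * (Real.log a - Real.log b) ≤ b * (a / b - 1) := this
      _ = a - b := by field_simp
  nlinarith [h2]

lemma ratkey' {Ψ₀ Ψ : Type*} [Fintype Ψ₀] [Fintype Ψ] (pol : Ψ → Ψ₀ → ℕ) (c : Ψ → ℝ)
    (hc : ∀ M₁ M₂ : Ψ → ℕ, reconfig pol M₁ M₂ →
      ∑ P, (M₁ P : ℝ) * c P = ∑ P, (M₂ P : ℝ) * c P)
    (q : Ψ → ℚ) (hq : ∀ m, ∑ P, (pol P m : ℚ) * q P = 0) :
    ∑ P, (q P : ℝ) * c P = 0 := by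
  classical
  set N : ℕ := ∏ P, (q P).den with hNdef
  have hz : ∀ P, ∃ z : ℤ, (z : ℚ) = N * q P := fun P =>
    rat_clear_den' (q P) N (Finset.dvd_prod_of_mem _ (Finset.mem_univ P))
  choose z hzq using hz
  set M₁ : Ψ → ℕ := fun P => (z P).toNat with hM₁
  set M₂ : Ψ → ℕ := fun P => (-(z P)).toNat with hM₂
  have hM : ∀ P, (M₁ P : ℤ) - (M₂ P : ℤ) = z P := fun P => by
    simp only [hM₁, hM₂]; omega
  have hrec : reconfig pol M₁ M₂ := by
    intro m
    have hZ : ∑ P, z P * (pol P m : ℤ) = 0 := by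
      have hcast : ((∑ P, z P * (pol P m : ℤ) : ℤ) : ℚ) = 0 := by
        push_cast
        calc ∑ P, (z P : ℚ) * (pol P m : ℚ)
            = ∑ P, (N : ℚ) * ((pol P m : ℚ) * q P) := by
              refine Finset.sum_congr rfl fun P _ => ?_
              rw [hzq P]; ring
          _ = (N:ℚ) * ∑ P, (pol P m : ℚ) * q P := by rw [Finset.mul_sum]
          _ = 0 := by rw [hq m, mul_zero]
      exact_mod_cast hcast
    have hint : (∑ P, (M₁ P : ℤ) * pol P m) = ∑ P, (M₂ P : ℤ) * pol P m := by
      have h2 : ∑ P, ((M₁ P : ℤ) - M₂ P) * pol P m = 0 := by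
        simp_rw [hM]; exact hZ
      simp only [sub_mul, Finset.sum_sub_distrib] at h2
      linarith
    exact_mod_cast hint
  have hb := hc M₁ M₂ hrec
  have hzr : ∑ P, (z P : ℝ) * c P = 0 := by
    have h2 : ∑ P, ((M₁ P : ℝ) - M₂ P) * c P = 0 := by
      simp only [sub_mul, Finset.sum_sub_distrib, hb, sub_self]
    have h3 : ∀ P, ((M₁ P : ℝ) - M₂ P) = (z P : ℝ) := fun P => by
      exact_mod_cast congrArg (Int.cast : ℤ → ℝ) (hM P)
    simp_rw [h3] at h2; exact h2
  have h4 : ∀ P, (z P : ℝ) = (N:ℝ) * (q P : ℝ) := fun P => by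
    exact_mod_cast congrArg (Rat.cast : ℚ → ℝ) (hzq P)
  simp_rw [h4] at hzr
  have h5 : (N:ℝ) * ∑ P, (q P : ℝ) * c P = 0 := by
    rw [Finset.mul_sum]; simpa [mul_assoc] using hzr
  have hNpos : 0 < N := Finset.prod_pos (fun P _ => (q P).pos)
  have hN0 : (N:ℝ) ≠ 0 := by positivity
  exact (mul_eq_zero.mp h5).resolve_left hN0

lemma realkey' {Ψ₀ Ψ : Type*} [Fintype Ψ₀] [Fintype Ψ] (pol : Ψ → Ψ₀ → ℕ) (c : Ψ → ℝ)
    (hc : ∀ M₁ M₂ : Ψ → ℕ, reconfig pol M₁ M₂ →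
      ∑ P, (M₁ P : ℝ) * c P = ∑ P, (M₂ P : ℝ) * c P)
    (v : Ψ → ℝ) (hv : ∀ m, ∑ P, (pol P m : ℝ) * v P = 0) :
    ∑ P, v P * c P = 0 := by
  classical
  set W : Submodule ℚ ℝ := Submodule.span ℚ (Set.range v) with hW
  have hfd : FiniteDimensional ℚ W := FiniteDimensional.span_of_finite ℚ (Set.finite_range v)
  let b := Module.finBasis ℚ W
  have hmem : ∀ P, v P ∈ W := fun P => Submodule.subset_span ⟨P, rfl⟩
  set q : Fin (Module.finrank ℚ W) → Ψ → ℚ := fun i P => b.repr ⟨v P, hmem P⟩ i with hqdef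
  have hrep : ∀ P, v P = ∑ i, (q i P : ℝ) * (b i : ℝ) := by
    intro P
    have hs := b.sum_repr ⟨v P, hmem P⟩
    have h2 := congrArg (Subtype.val) hs
    simp only [AddSubmonoidClass.coe_finset_sum, SetLike.val_smul, Rat.smul_def] at h2
    exact h2.symm
  have li : LinearIndependent ℚ (fun i => ((b i : ℝ))) :=
    b.linearIndependent.map' W.subtype W.ker_subtype
  have hqker : ∀ i, ∀ m, ∑ P, (pol P m : ℚ) * q i P = 0 := by
    intro i m
    have h0 : ∑ j, (∑ P, (pol P m : ℚ) * q j P) • ((b j : ℝ)) = 0 := by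
      calc ∑ j, (∑ P, (pol P m : ℚ) * q j P) • ((b j : ℝ))
          = ∑ j, ∑ P, (pol P m : ℝ) * ((q j P : ℝ) * (b j : ℝ)) := by
            refine Finset.sum_congr rfl fun j _ => ?_
            rw [Rat.smul_def]
            push_cast
            rw [Finset.sum_mul]
            refine Finset.sum_congr rfl fun P _ => by ring
        _ = ∑ P, (pol P m : ℝ) * v P := by
            rw [Finset.sum_comm]
            refine Finset.sum_congr rfl fun P _ => ?_
            rw [hrep P, Finset.mul_sum]
        _ = 0 := hv m
    exact Fintype.linearIndependent_iff.mp li _ h0 i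
  calc ∑ P, v P * c P
      = ∑ P, ∑ i, (b i : ℝ) * ((q i P : ℝ) * c P) := by
        refine Finset.sum_congr rfl fun P _ => ?_
        rw [hrep P, Finset.sum_mul]
        refine Finset.sum_congr rfl fun i _ => by ring
    _ = ∑ i, (b i : ℝ) * ∑ P, (q i P : ℝ) * c P := by
        rw [Finset.sum_comm]
        refine Finset.sum_congr rfl fun i _ => by rw [Finset.mul_sum]
    _ = 0 := by
        refine Finset.sum_eq_zero fun i _ => ?_
        rw [ratkey' pol c hc (q i) (hqker i), mul_zero]


/-- If every reaction is balanced at `x`, then `x` minimizes `g`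
subject to the mass-conservation constraint `A·x = x⁰`. -/
theorem detailed_balance_implies_min {Ψ₀ Ψ : Type*} [Fintype Ψ₀] [Fintype Ψ]
    (pol : Ψ → Ψ₀ → ℕ) (x0 : Ψ₀ → ℝ) (hx0 : ∀ m, x0 m ∈ Set.Ioo (0:ℝ) 1)
    (x : Ψ → ℝ) (hx : ∀ P, x P ∈ Set.Ioo (0:ℝ) 1)
    (hAx : massVec pol x = x0)
    (hbal : ∀ M₁ M₂ : Ψ → ℕ, reconfig pol M₁ M₂ → balancedAt x M₁ M₂) :
    ∀ x' : Ψ → ℝ, (∀ P, x' P ∈ Set.Ioo (0:ℝ) 1) → massVec pol x' = x0 →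
      gCost x ≤ gCost x' := by
  intro x' hx' hAx'
  have hc : ∀ M₁ M₂ : Ψ → ℕ, reconfig pol M₁ M₂ →
      ∑ P, (M₁ P : ℝ) * Real.log (x P) = ∑ P, (M₂ P : ℝ) * Real.log (x P) := by
    intro M₁ M₂ hr
    have hb := hbal M₁ M₂ hr
    unfold balancedAt at hb
    have hlog : ∀ M : Ψ → ℕ, Real.log (∏ P, x P ^ M P) = ∑ P, (M P : ℝ) * Real.log (x P) := by
      intro M
      rw [Real.log_prod (fun P _ => pow_ne_zero _ (hx P).1.ne')]
      exact Finset.sum_congr rfl fun P _ => Real.log_pow _ _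
    rw [← hlog M₁, ← hlog M₂, hb]
  have hv : ∀ m, ∑ P, (pol P m : ℝ) * (x' P - x P) = 0 := by
    intro m
    have h1 : massVec pol x' m = x0 m := congrFun hAx' m
    have h2 : massVec pol x m = x0 m := congrFun hAx m
    simp only [massVec] at h1 h2
    simp only [mul_sub, Finset.sum_sub_distrib, h1, h2, sub_self]
  have hkey := realkey' pol (fun P => Real.log (x P)) hc _ hv
  have hle : ∑ P, (x' P - x P) * Real.log (x P) ≤
      ∑ P, (x' P * (Real.log (x' P) - 1) - x P * (Real.log (x P) - 1)) :=
    Finset.sum_le_sum fun P _ => pt_ineq' (hx P).1 (hx' P).1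
  rw [hkey] at hle
  rw [Finset.sum_sub_distrib] at hle
  unfold gCost
  linarith
end

section
/- Let S ⊆ Ψ with μ : S → (0,1] be on-target. Let x⁰ ∈ (0,1)^{Ψ⁰} and let x ∈ (0,1)^Ψ satisfy A·x = x⁰. If every canonical reaction is balanced at x, then g(x) ≤ g(x') for every x' ∈ (0,1)^Ψ with A·x' = x⁰. -/
open scoped BigOperators

section AuxProof

open Finset

variable {Ψ₀ Ψ : Type*} [Fintype Ψ₀] [Fintype Ψ]

private lemma bal_log {x : Ψ → ℝ} (hx : ∀ P, 0 < x P) {M₁ M₂ : Ψ → ℕ}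
    (h : balancedAt x M₁ M₂) :
    ∑ P, (M₁ P : ℝ) * Real.log (x P) = ∑ P, (M₂ P : ℝ) * Real.log (x P) := by
  have h' := congrArg Real.log h
  rw [Real.log_prod (fun P _ => pow_ne_zero _ (hx P).ne'),
      Real.log_prod (fun P _ => pow_ne_zero _ (hx P).ne')] at h'
  simpa [Real.log_pow] using h'

private lemma recon_log (pol : Ψ → Ψ₀ → ℕ) (S : Set Ψ) {x : Ψ → ℝ}
    (hx : ∀ P, 0 < x P)
    (hcov : ∀ P : Ψ, ∃ M M' : Ψ → ℕ, supportedOn S M ∧ 1 ≤ M' P ∧ reconfig pol M M')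
    (hbal : ∀ M₁ M₂ : Ψ → ℕ, supportedOn S M₁ → reconfig pol M₁ M₂ → balancedAt x M₁ M₂)
    {M₁ M₂ : Ψ → ℕ} (hM : reconfig pol M₁ M₂) :
    ∑ P, (M₁ P : ℝ) * Real.log (x P) = ∑ P, (M₂ P : ℝ) * Real.log (x P) := by
  classical
  choose N N' hNS hN1 hNr using hcov
  set R : Ψ → Ψ → ℕ := fun Q P => N' Q P - (if P = Q then 1 else 0) with hRdef
  have hN' : ∀ Q P, N' Q P = R Q P + (if P = Q then 1 else 0) := by
    intro Q P
    by_cases h : P = Q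
    · subst h
      have := hN1 P
      simp only [hRdef, ↓reduceIte]
      omega
    · simp [hRdef, h]
  set C : Ψ → ℕ := fun P => ∑ Q, M₁ Q * N Q P with hCdef
  set Rs : Ψ → ℕ := fun P => ∑ Q, M₁ Q * R Q P with hRsdef
  have hCS : supportedOn S C := by
    intro P hP
    exact Finset.sum_eq_zero fun Q _ => by rw [hNS Q P hP, mul_zero]
  have hRsum : ∀ m, ∑ P, Rs P * pol P m = ∑ Q, M₁ Q * ∑ P, R Q P * pol P m := by
    intro m
    simp only [hRsdef, Finset.sum_mul, Finset.mul_sum, mul_assoc]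
    exact Finset.sum_comm
  have key : reconfig pol C (fun P => M₁ P + Rs P) := by
    intro m
    have lhs : ∑ P, C P * pol P m = ∑ Q, M₁ Q * ∑ P, N Q P * pol P m := by
      simp only [hCdef, Finset.sum_mul, Finset.mul_sum, mul_assoc]
      exact Finset.sum_comm
    rw [lhs]
    have step : ∀ Q, ∑ P, N Q P * pol P m = ∑ P, R Q P * pol P m + pol Q m := by
      intro Q
      rw [hNr Q m]
      have : ∀ P, N' Q P * pol P m = R Q P * pol P m + (if P = Q then pol Q m else 0) := by
        intro P
        rw [hN' Q P, add_mul]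
        by_cases h : P = Q <;> simp [h]
      simp [this, Finset.sum_add_distrib]
    simp only [step]
    rw [Finset.sum_congr rfl fun Q _ => Nat.mul_add (M₁ Q) _ _, Finset.sum_add_distrib]
    simp only [add_mul, Finset.sum_add_distrib, hRsum m]
    omega
  have key2 : reconfig pol C (fun P => M₂ P + Rs P) := by
    intro m
    rw [key m]
    simp only [add_mul, Finset.sum_add_distrib, hM m]
  have h1 := bal_log hx (hbal _ _ hCS key)
  have h2 := bal_log hx (hbal _ _ hCS key2)
  have e1 : ∀ (M : Ψ → ℕ), ∑ P, ((M P + Rs P : ℕ) : ℝ) * Real.log (x P)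
      = ∑ P, (M P : ℝ) * Real.log (x P) + ∑ P, (Rs P : ℝ) * Real.log (x P) := by
    intro M
    rw [← Finset.sum_add_distrib]
    exact Finset.sum_congr rfl fun P _ => by push_cast; ring
  rw [e1] at h1 h2
  linarith

private lemma int_kernel (pol : Ψ → Ψ₀ → ℕ) (ℓ : Ψ → ℝ)
    (hlog : ∀ M₁ M₂ : Ψ → ℕ, reconfig pol M₁ M₂ →
      ∑ P, (M₁ P : ℝ) * ℓ P = ∑ P, (M₂ P : ℝ) * ℓ P)
    (v : Ψ → ℤ) (hv : ∀ m, ∑ P, v P * (pol P m : ℤ) = 0) :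
    ∑ P, (v P : ℝ) * ℓ P = 0 := by
  set M₁ : Ψ → ℕ := fun P => (v P).toNat with hM1
  set M₂ : Ψ → ℕ := fun P => (-(v P)).toNat with hM2
  have hsplit : ∀ P, (M₁ P : ℤ) = v P + (M₂ P : ℤ) := by
    intro P; simp only [hM1, hM2]; omega
  have hrec : reconfig pol M₁ M₂ := by
    intro m
    have : (∑ P, (M₁ P : ℤ) * (pol P m : ℤ)) = ∑ P, (M₂ P : ℤ) * (pol P m : ℤ) := by
      calc (∑ P, (M₁ P : ℤ) * (pol P m : ℤ))
          = ∑ P, (v P * (pol P m : ℤ) + (M₂ P : ℤ) * (pol P m : ℤ)) := by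
            exact Finset.sum_congr rfl fun P _ => by rw [hsplit P]; ring
        _ = ∑ P, v P * (pol P m : ℤ) + ∑ P, (M₂ P : ℤ) * (pol P m : ℤ) := by
            rw [Finset.sum_add_distrib]
        _ = ∑ P, (M₂ P : ℤ) * (pol P m : ℤ) := by rw [hv m, zero_add]
    exact_mod_cast this
  have h := hlog M₁ M₂ hrec
  have : ∑ P, (v P : ℝ) * ℓ P
      = ∑ P, (M₁ P : ℝ) * ℓ P - ∑ P, (M₂ P : ℝ) * ℓ P := by
    rw [← Finset.sum_sub_distrib]
    refine Finset.sum_congr rfl fun P _ => ?_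
    have : (v P : ℝ) = (M₁ P : ℝ) - (M₂ P : ℝ) := by
      have := hsplit P
      push_cast
      exact_mod_cast (by push_cast [this]; ring : ((v P : ℝ)) = ((M₁ P : ℤ) : ℝ) - ((M₂ P : ℤ) : ℝ))
    rw [this]; ring
  rw [this, h, sub_self]

private lemma rat_kernel (pol : Ψ → Ψ₀ → ℕ) (ℓ : Ψ → ℝ)
    (hint : ∀ v : Ψ → ℤ, (∀ m, ∑ P, v P * (pol P m : ℤ) = 0) → ∑ P, (v P : ℝ) * ℓ P = 0)
    (c : Ψ → ℚ) (hc : ∀ m, ∑ P, c P * (pol P m : ℚ) = 0) :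
    ∑ P, (c P : ℝ) * ℓ P = 0 := by
  classical
  set Nd : ℕ := ∏ P, (c P).den with hNd
  have hNdpos : 0 < Nd := Finset.prod_pos fun P _ => (c P).pos
  set v : Ψ → ℤ := fun P => ((Nd / (c P).den : ℕ) : ℤ) * (c P).num with hvdef
  have hvq : ∀ P, ((v P : ℚ)) = (Nd : ℚ) * c P := by
    intro P
    have hdvd : (c P).den ∣ Nd := Finset.dvd_prod_of_mem _ (Finset.mem_univ P)
    have h0 : ((v P : ℚ)) = ((Nd / (c P).den : ℕ) : ℚ) * ((c P).num : ℚ) := by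
      simp only [hvdef, Int.cast_mul, Int.cast_natCast]
    calc ((v P : ℚ)) = ((Nd / (c P).den : ℕ) : ℚ) * ((c P).num : ℚ) := h0
      _ = ((Nd / (c P).den : ℕ) : ℚ) * (((c P).den : ℚ) * c P) := by rw [Rat.den_mul_eq_num]
      _ = (((Nd / (c P).den) * (c P).den : ℕ) : ℚ) * c P := by push_cast; ring
      _ = (Nd : ℚ) * c P := by rw [Nat.div_mul_cancel hdvd]
  have hvker : ∀ m, ∑ P, v P * (pol P m : ℤ) = 0 := by
    intro m
    have : ((∑ P, v P * (pol P m : ℤ) : ℤ) : ℚ) = 0 := by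
      push_cast
      calc ∑ P, (v P : ℚ) * (pol P m : ℚ)
          = ∑ P, (Nd : ℚ) * (c P * (pol P m : ℚ)) := by
            exact Finset.sum_congr rfl fun P _ => by rw [hvq P]; ring
        _ = (Nd : ℚ) * ∑ P, c P * (pol P m : ℚ) := by rw [Finset.mul_sum]
        _ = 0 := by rw [hc m, mul_zero]
    exact_mod_cast this
  have h := hint v hvker
  have hrw : ∑ P, (v P : ℝ) * ℓ P = (Nd : ℝ) * ∑ P, (c P : ℝ) * ℓ P := by
    rw [Finset.mul_sum]
    refine Finset.sum_congr rfl fun P _ => ?_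
    have : ((v P : ℝ)) = (Nd : ℝ) * (c P : ℝ) := by
      have := hvq P
      exact_mod_cast congrArg (fun q : ℚ => (q : ℝ)) this
    rw [this]; ring
  rw [hrw] at h
  have : (Nd : ℝ) ≠ 0 := Nat.cast_ne_zero.mpr hNdpos.ne'
  exact (mul_eq_zero.mp h).resolve_left this

private lemma real_kernel (pol : Ψ → Ψ₀ → ℕ) (ℓ : Ψ → ℝ)
    (hrat : ∀ c : Ψ → ℚ, (∀ m, ∑ P, c P * (pol P m : ℚ) = 0) →
      ∑ P, (c P : ℝ) * ℓ P = 0)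
    (d : Ψ → ℝ) (hd : ∀ m, ∑ P, (pol P m : ℝ) * d P = 0) :
    ∑ P, d P * ℓ P = 0 := by
  classical
  set V : Submodule ℚ ℝ := Submodule.span ℚ (Set.range d) with hV
  haveI : FiniteDimensional ℚ V := FiniteDimensional.span_of_finite ℚ (Set.finite_range d)
  set b := Module.finBasis ℚ V with hb
  set dv : Ψ → V := fun P => ⟨d P, Submodule.subset_span (Set.mem_range_self P)⟩ with hdv
  set c : Ψ → Fin (Module.finrank ℚ ↥V) → ℚ := fun P j => b.repr (dv P) j with hcdef
  have hker : ∀ j m, ∑ P, c P j * (pol P m : ℚ) = 0 := by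
    intro j m
    have hz : (∑ P, ((pol P m : ℚ)) • dv P) = 0 := by
      apply Subtype.ext
      push_cast [Rat.smul_def]
      simpa using hd m
    have := congrArg (fun w => b.repr w j) hz
    simp only [map_sum, map_smul, Finsupp.smul_apply, smul_eq_mul, map_zero,
      Finsupp.coe_zero, Pi.zero_apply, Finset.sum_apply'] at this
    simpa [hcdef, mul_comm] using this
  have hPd : ∀ P, d P = ∑ j, (c P j : ℝ) * ((b j : ℝ)) := by
    intro P
    have h2 := congrArg (Subtype.val) (b.sum_repr (dv P))
    calc d P = ((dv P : ℝ)) := rfl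
      _ = ∑ j, (c P j : ℝ) * ((b j : ℝ)) := by
          rw [← h2, AddSubmonoidClass.coe_finset_sum]
          exact Finset.sum_congr rfl fun j _ => by
            rw [SetLike.val_smul, Rat.smul_def]
  calc ∑ P, d P * ℓ P
      = ∑ P, ∑ j, (c P j : ℝ) * ((b j : ℝ)) * ℓ P := by
        exact Finset.sum_congr rfl fun P _ => by rw [hPd P, Finset.sum_mul]
    _ = ∑ j, ((b j : ℝ)) * ∑ P, (c P j : ℝ) * ℓ P := by
        rw [Finset.sum_comm]
        exact Finset.sum_congr rfl fun j _ => by rw [Finset.mul_sum]; exact Finset.sum_congr rfl fun P _ => by ring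
    _ = 0 := by
        refine Finset.sum_eq_zero fun j _ => ?_
        rw [hrat (fun P => c P j) (hker j), mul_zero]

private lemma entropy_ineq {a b : ℝ} (ha : 0 < a) (hb : 0 < b) :
    a * (Real.log a - 1) + (b - a) * Real.log a ≤ b * (Real.log b - 1) := by
  have h := Real.log_le_sub_one_of_pos (show (0:ℝ) < a / b from div_pos ha hb)
  rw [Real.log_div ha.ne' hb.ne'] at h
  have h2 : b * (Real.log a - Real.log b) ≤ b * (a / b - 1) :=
    mul_le_mul_of_nonneg_left h hb.le
  have h3 : b * (a / b - 1) = a - b := by field_simp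
  nlinarith [h2, h3]

end AuxProof

/-- If every canonical reaction is balanced at `x`, then `x` minimizes `g`
subject to the mass-conservation constraint. -/
theorem canonical_balance_implies_min {Ψ₀ Ψ : Type*} [Fintype Ψ₀] [Fintype Ψ]
    (pol : Ψ → Ψ₀ → ℕ) (S : Set Ψ) (μ : Ψ → ℝ) (hOT : onTarget pol S μ)
    (x0 : Ψ₀ → ℝ) (hx0 : ∀ m, x0 m ∈ Set.Ioo (0:ℝ) 1)
    (x : Ψ → ℝ) (hx : ∀ P, x P ∈ Set.Ioo (0:ℝ) 1)
    (hAx : massVec pol x = x0)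
    (hbal : ∀ M₁ M₂ : Ψ → ℕ, supportedOn S M₁ → reconfig pol M₁ M₂ → balancedAt x M₁ M₂) :
    ∀ x' : Ψ → ℝ, (∀ P, x' P ∈ Set.Ioo (0:ℝ) 1) → massVec pol x' = x0 →
      gCost x ≤ gCost x' := by
  intro x' hx' hAx'
  classical
  set ℓ : Ψ → ℝ := fun P => Real.log (x P) with hℓ
  have hxpos : ∀ P, 0 < x P := fun P => (hx P).1
  have hlog : ∀ M₁ M₂ : Ψ → ℕ, reconfig pol M₁ M₂ →
      ∑ P, (M₁ P : ℝ) * ℓ P = ∑ P, (M₂ P : ℝ) * ℓ P :=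
    fun M₁ M₂ h => recon_log pol S hxpos hOT.2.1 hbal h
  have hint := int_kernel pol ℓ hlog
  have hrat := rat_kernel pol ℓ hint
  have hd : ∀ m, ∑ P, (pol P m : ℝ) * (x' P - x P) = 0 := by
    intro m
    have h1 := congrFun hAx m
    have h2 := congrFun hAx' m
    simp only [massVec] at h1 h2
    calc ∑ P, (pol P m : ℝ) * (x' P - x P)
        = ∑ P, (pol P m : ℝ) * x' P - ∑ P, (pol P m : ℝ) * x P := by
          rw [← Finset.sum_sub_distrib]
          exact Finset.sum_congr rfl fun P _ => by ring
      _ = 0 := by rw [h1, h2, sub_self]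
  have hperp := real_kernel pol ℓ hrat (fun P => x' P - x P) hd
  have hconv : gCost x + ∑ P, (x' P - x P) * ℓ P ≤ gCost x' := by
    rw [gCost, gCost, ← Finset.sum_add_distrib]
    exact Finset.sum_le_sum fun P _ => entropy_ineq (hxpos P) (hx' P).1
  linarith [hperp, hconv]
end

section
/- Let S ⊆ Ψ with μ : S → (0,1] be on-target. If a configuration x ∈ (0,1)^Ψ balances every canonical reaction, then x balances every reaction M₁ → M₂ (with arbitrary reactants M₁ ∈ ℕ^Ψ). -/
open scoped BigOperators

/-- If a configuration balances every canonical reaction,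
then it balances every reaction. -/
theorem canonical_balance_implies_all_balance {Ψ₀ Ψ : Type*} [Fintype Ψ₀] [Fintype Ψ]
    (pol : Ψ → Ψ₀ → ℕ) (S : Set Ψ) (μ : Ψ → ℝ) (hOT : onTarget pol S μ)
    (x : Ψ → ℝ) (hx : ∀ P, x P ∈ Set.Ioo (0:ℝ) 1)
    (hbal : ∀ M₁ M₂ : Ψ → ℕ, supportedOn S M₁ → reconfig pol M₁ M₂ → balancedAt x M₁ M₂) :
    ∀ M₁ M₂ : Ψ → ℕ, reconfig pol M₁ M₂ → balancedAt x M₁ M₂ := by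
  obtain ⟨hμ, hcov, hmu⟩ := hOT
  intro M₁ M₂ hrc
  choose Mof M'of hSsup h1 hrcP using hcov
  set L : Ψ → ℕ := fun Q => ∑ P, M₁ P * Mof P Q with hLdef
  set T : Ψ → ℕ := fun Q => ∑ P, M₁ P * M'of P Q with hTdef
  have hTge : ∀ Q, M₁ Q ≤ T Q := by
    intro Q
    calc M₁ Q = M₁ Q * 1 := (mul_one _).symm
      _ ≤ M₁ Q * M'of Q Q := Nat.mul_le_mul_left _ (h1 Q)
      _ ≤ ∑ P, M₁ P * M'of P Q :=
          Finset.single_le_sum (f := fun P => M₁ P * M'of P Q)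
            (fun _ _ => Nat.zero_le _) (Finset.mem_univ Q)
  set D : Ψ → ℕ := fun Q => T Q - M₁ Q with hDdef
  have hMD : ∀ Q, M₁ Q + D Q = T Q := fun Q => Nat.add_sub_cancel' (hTge Q)
  have hLS : supportedOn S L := by
    intro Q hQ
    simp only [hLdef]
    exact Finset.sum_eq_zero (fun P _ => by rw [hSsup P Q hQ, mul_zero])
  -- reconfig L T
  have hmassP : ∀ P m, ∑ Q, Mof P Q * pol Q m = ∑ Q, M'of P Q * pol Q m :=
    fun P m => hrcP P m
  have hLT : ∀ m, ∑ Q, L Q * pol Q m = ∑ Q, T Q * pol Q m := by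
    intro m
    simp only [hLdef, hTdef, Finset.sum_mul]
    rw [Finset.sum_comm]
    conv_rhs => rw [Finset.sum_comm]
    refine Finset.sum_congr rfl (fun P _ => ?_)
    simp only [mul_assoc, ← Finset.mul_sum]
    rw [hmassP P m]
  have rc1 : reconfig pol L (fun Q => M₁ Q + D Q) := by
    intro m
    rw [hLT m]
    simp only [hMD]
  have rc2 : reconfig pol L (fun Q => M₂ Q + D Q) := by
    intro m
    rw [hLT m]
    simp only [← hMD, add_mul, Finset.sum_add_distrib, hrc m]
  have b1 := hbal L (fun Q => M₁ Q + D Q) hLS rc1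
  have b2 := hbal L (fun Q => M₂ Q + D Q) hLS rc2
  unfold balancedAt at b1 b2 ⊢
  have hsplit : ∀ M : Ψ → ℕ, ∏ P, x P ^ (M P + D P) = (∏ P, x P ^ M P) * ∏ P, x P ^ D P := by
    intro M
    rw [← Finset.prod_mul_distrib]
    exact Finset.prod_congr rfl (fun P _ => pow_add _ _ _)
  simp only [hsplit] at b1 b2
  have hDne : (∏ P, x P ^ D P) ≠ 0 :=
    Finset.prod_ne_zero_iff.mpr (fun P _ => pow_ne_zero _ (ne_of_gt (hx P).1))
  have := b1.symm.trans b2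
  exact mul_right_cancel₀ hDne this
end

section
/- Let S ⊆ Ψ with μ : S → (0,1] be on-target and stable, and consider any levelizing run (T₁, …, T_{r+1}, ν) for S with μ. Then for every P ∉ S we have ν(P) ≥ μ₁ > 1, where μ₁ is the first-level minimum ratio of the run. -/
open scoped BigOperators

section LevelizingRun

variable {Ψ₀ Ψ : Type*} [Fintype Ψ₀] [Fintype Ψ]

/-- A levelizing run for an on-target set `S` with exponents `μ`: a strictly increasing
chain of sets `T 0 = S ⊊ T 1 ⊊ ⋯ ⊊ T r = Ψ` (so `T j` here is `T_{j+1}` of the paper),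
an exponent function `ν : Ψ → ℝ` extending `μ`, and level values `lev j` (so `lev 0` is
the paper's `μ₁`, `lev (j-1)` is `μ_j`), such that at each level `j < r`: `lev j` is the
attained infimum of the ratios `k_{T j}(α) / l_{T j}(α)` over canonical reactions `α`
with nonzero novelty; `T (j+1) ∖ T j` consists exactly of the off-`T j` products of
reactions attaining the infimum; and all such new polymers get exponent `lev j`. -/
structure LevelizingRun (pol : Ψ → Ψ₀ → ℕ) (S : Set Ψ) (μ : Ψ → ℝ) (r : ℕ) where
  T : ℕ → Set Ψ
  ν : Ψ → ℝ
  lev : ℕ → ℝ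
  T_zero : T 0 = S
  T_last : T r = Set.univ
  T_strict : ∀ j, j < r → T j ⊂ T (j + 1)
  nu_on_S : ∀ P ∈ S, ν P = μ P
  lev_le : ∀ j, j < r → ∀ M₁ M₂ : Ψ → ℕ, supportedOn S M₁ → reconfig pol M₁ M₂ →
    novelty (T j) M₂ ≠ 0 →
    lev j ≤ imbalance (T j) μ ν M₁ M₂ / (novelty (T j) M₂ : ℝ)
  lev_attained : ∀ j, j < r → ∃ M₁ M₂ : Ψ → ℕ, supportedOn S M₁ ∧ reconfig pol M₁ M₂ ∧
    novelty (T j) M₂ ≠ 0 ∧ imbalance (T j) μ ν M₁ M₂ / (novelty (T j) M₂ : ℝ) = lev j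
  new_mem : ∀ j, j < r → ∀ P : Ψ,
    (P ∈ T (j + 1) ∧ P ∉ T j) ↔
      (P ∉ T j ∧ ∃ M₁ M₂ : Ψ → ℕ, supportedOn S M₁ ∧ reconfig pol M₁ M₂ ∧
        novelty (T j) M₂ ≠ 0 ∧
        imbalance (T j) μ ν M₁ M₂ / (novelty (T j) M₂ : ℝ) = lev j ∧ 1 ≤ M₂ P)
  nu_new : ∀ j, j < r → ∀ P ∈ T (j + 1), P ∉ T j → ν P = lev j

end LevelizingRun


section ProofHelpers

variable {Ψ₀ Ψ : Type*} [Fintype Ψ₀] [Fintype Ψ]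

lemma indicator_sum_split (A B : Set Ψ) (hAB : A ⊆ B) (f : Ψ → ℝ) :
    ∑ P, B.indicator f P = ∑ P, A.indicator f P + ∑ P, (B \ A).indicator f P := by
  rw [← Finset.sum_add_distrib]
  refine Finset.sum_congr rfl fun P _ => ?_
  by_cases h1 : P ∈ A
  · simp [Set.indicator, h1, hAB h1]
  · by_cases h2 : P ∈ B <;> simp [Set.indicator, h1, h2]

lemma novelty_split (A B : Set Ψ) (hAB : A ⊆ B) (M₂ : Ψ → ℕ) :
    novelty A M₂ = novelty B M₂ + ∑ P, (B \ A).indicator M₂ P := by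
  unfold novelty
  rw [← Finset.sum_add_distrib]
  refine Finset.sum_congr rfl fun P _ => ?_
  by_cases h1 : P ∈ A
  · simp [Set.indicator, h1, hAB h1]
  · by_cases h2 : P ∈ B <;> simp [Set.indicator, h1, h2]

lemma lev_mono_step {pol : Ψ → Ψ₀ → ℕ} {S : Set Ψ} {μ : Ψ → ℝ} {r : ℕ}
    (run : LevelizingRun pol S μ r) (j : ℕ) (hj : j + 1 < r) :
    run.lev j ≤ run.lev (j + 1) := by
  obtain ⟨M₁, M₂, hsup, hrc, hnovB, heq⟩ := run.lev_attained (j + 1) hj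
  have hjr : j < r := Nat.lt_of_succ_lt hj
  have hAB : run.T j ⊆ run.T (j + 1) := (run.T_strict j hjr).subset
  set A := run.T j
  set B := run.T (j + 1)
  set c : ℕ := ∑ P, (B \ A).indicator M₂ P with hc
  have hnsplit : novelty A M₂ = novelty B M₂ + c := novelty_split A B hAB M₂
  have hnovA : novelty A M₂ ≠ 0 := by omega
  have h1 := run.lev_le j hjr M₁ M₂ hsup hrc hnovA
  -- imbalance relation
  have hisplit := indicator_sum_split A B hAB (fun Q => (M₂ Q : ℝ) * run.ν Q)
  have hdiffval : ∑ P, (B \ A).indicator (fun Q => (M₂ Q : ℝ) * run.ν Q) P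
      = run.lev j * (c : ℝ) := by
    have hcast : (c : ℝ) = ∑ P, (B \ A).indicator (fun Q => (M₂ Q : ℝ)) P := by
      rw [hc, Nat.cast_sum]
      refine Finset.sum_congr rfl fun P _ => ?_
      by_cases h : P ∈ B \ A <;> simp [Set.indicator, h]
    rw [hcast, Finset.mul_sum]
    refine Finset.sum_congr rfl fun P _ => ?_
    by_cases h : P ∈ B \ A
    · have hν : run.ν P = run.lev j := run.nu_new j hjr P h.1 h.2
      simp [Set.indicator, h, hν]; ring
    · simp [Set.indicator, h]
  have hkB : imbalance B μ run.ν M₁ M₂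
      = imbalance A μ run.ν M₁ M₂ - run.lev j * (c : ℝ) := by
    unfold imbalance
    rw [hisplit, hdiffval]; ring
  have hlBpos : (0 : ℝ) < (novelty B M₂ : ℝ) := by
    exact_mod_cast Nat.pos_of_ne_zero hnovB
  have hlApos : (0 : ℝ) < (novelty A M₂ : ℝ) := by
    exact_mod_cast Nat.pos_of_ne_zero hnovA
  have h2 : run.lev j * (novelty A M₂ : ℝ) ≤ imbalance A μ run.ν M₁ M₂ :=
    (le_div_iff₀ hlApos).mp h1
  rw [← heq, le_div_iff₀ hlBpos, hkB]
  have hlsplit : (novelty A M₂ : ℝ) = (novelty B M₂ : ℝ) + (c : ℝ) := by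
    exact_mod_cast hnsplit
  have h3 : run.lev j * ((novelty B M₂ : ℝ) + (c : ℝ)) ≤ imbalance A μ run.ν M₁ M₂ := by
    rw [← hlsplit]; exact h2
  rw [mul_add] at h3
  linarith

lemma lev_zero_le {pol : Ψ → Ψ₀ → ℕ} {S : Set Ψ} {μ : Ψ → ℝ} {r : ℕ}
    (run : LevelizingRun pol S μ r) : ∀ j, j < r → run.lev 0 ≤ run.lev j := by
  intro j
  induction j with
  | zero => intro _; exact le_refl _
  | succ j ih => intro hj; exact le_trans (ih (Nat.lt_of_succ_lt hj)) (lev_mono_step run j hj)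

end ProofHelpers

/-- in any levelizing run for a stable on-target set, every off-target
polymer has exponent `ν(P) ≥ μ₁ > 1`, where `μ₁ = lev 0` is the first-level minimum
ratio of the run. -/
theorem offtarget_exponent_gt_one {Ψ₀ Ψ : Type*} [Fintype Ψ₀] [Fintype Ψ]
    (pol : Ψ → Ψ₀ → ℕ) (S : Set Ψ) (μ : Ψ → ℝ)
    (hOT : onTarget pol S μ) (hSt : stableSet pol S μ)
    (r : ℕ) (run : LevelizingRun pol S μ r) :
    ∀ P ∉ S, run.lev 0 ≤ run.ν P ∧ 1 < run.lev 0 := by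
  classical
  intro P hP
  have hr : 0 < r := by
    rcases Nat.eq_zero_or_pos r with h0 | h
    · exfalso
      have : run.T 0 = Set.univ := by rw [show (0:ℕ) = r from h0.symm]; exact run.T_last
      rw [run.T_zero] at this
      exact hP (this ▸ Set.mem_univ P)
    · exact h
  -- 1 < lev 0
  have himb : ∀ M₁ M₂ : Ψ → ℕ, imbalance (run.T 0) μ run.ν M₁ M₂ = imbalance S μ μ M₁ M₂ := by
    intro M₁ M₂
    unfold imbalance
    rw [run.T_zero]
    congr 1
    refine Finset.sum_congr rfl fun Q _ => ?_
    by_cases hQ : Q ∈ S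
    · simp [Set.indicator, hQ, run.nu_on_S Q hQ]
    · simp [Set.indicator, hQ]
  have hlev1 : 1 < run.lev 0 := by
    obtain ⟨M₁, M₂, hsup, hrc, hnov, heq⟩ := run.lev_attained 0 hr
    rw [← heq, himb, run.T_zero]
    exact hSt M₁ M₂ hsup hrc (by rwa [run.T_zero] at hnov)
  refine ⟨?_, hlev1⟩
  -- find the level at which P enters
  have hex : ∃ k, P ∈ run.T k := ⟨r, by rw [run.T_last]; exact Set.mem_univ P⟩
  set k := Nat.find hex with hk
  have hkspec : P ∈ run.T k := Nat.find_spec hex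
  have hkle : k ≤ r := Nat.find_le (by rw [run.T_last]; exact Set.mem_univ P)
  have hkne : k ≠ 0 := by
    intro h0
    rw [h0, run.T_zero] at hkspec
    exact hP hkspec
  obtain ⟨j, hj⟩ := Nat.exists_eq_succ_of_ne_zero hkne
  have hjr : j < r := by omega
  have hPnot : P ∉ run.T j := Nat.find_min hex (by omega)
  have hν : run.ν P = run.lev j := run.nu_new j hjr P (by rw [← Nat.succ_eq_add_one, ← hj]; exact hkspec) hPnot
  rw [hν]
  exact lev_zero_le run j hjr
end

section
/- Let S ⊆ Ψ with μ : S → (0,1] be on-target and stable, and consider any levelizing run (T₁, …, T_{r+1}, ν) for S with μ. For any level index i ∈ {1,…,r} and any polymer P ∉ T_i, define μ̃_i(P) = inf{ k_{T_i}(α)/l_{T_i}(α) : α : M₁ → M₂ canonical with M₂(P) ≥ 1 } (note any such α has l_{T_i}(α) ≥ 1 since P ∉ T_i). Then ν(P) ≥ μ̃_i(P) ≥ μ_i. -/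
open scoped BigOperators

section Aux
variable {Ψ₀ Ψ : Type*} [Fintype Ψ₀] [Fintype Ψ]

lemma indicator_split_pt {α : Type*} (U V : Set α) (h : U ⊆ V) (f : α → ℝ) (x : α) :
    V.indicator f x = U.indicator f x + (V \ U).indicator f x := by
  classical
  by_cases hU : x ∈ U
  · have hV : x ∈ V := h hU
    have : x ∉ V \ U := by simp [hU]
    simp [Set.indicator_apply, hU, hV, this]
  · by_cases hV : x ∈ V
    · simp [Set.indicator_apply, hU, hV, Set.mem_diff]
    · have : x ∉ V \ U := fun h' => hV h'.1
      simp [Set.indicator_apply, hU, hV, this]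

lemma imbalance_split (U V : Set Ψ) (h : U ⊆ V) (μ ν : Ψ → ℝ) (M₁ M₂ : Ψ → ℕ) :
    imbalance U μ ν M₁ M₂ = imbalance V μ ν M₁ M₂ +
      ∑ Q, (V \ U).indicator (fun Q => (M₂ Q : ℝ) * ν Q) Q := by
  unfold imbalance
  rw [Finset.sum_congr rfl (fun x _ => indicator_split_pt U V h _ x),
    Finset.sum_add_distrib]
  ring

lemma novelty_cast (U : Set Ψ) (M₂ : Ψ → ℕ) :
    (novelty U M₂ : ℝ) = ∑ Q, Uᶜ.indicator (fun Q => (M₂ Q : ℝ)) Q := by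
  unfold novelty
  push_cast
  refine Finset.sum_congr rfl fun x _ => ?_
  by_cases h : x ∈ Uᶜ <;> simp [h]

lemma novelty_split_s5 (U V : Set Ψ) (h : U ⊆ V) (M₂ : Ψ → ℕ) :
    (novelty U M₂ : ℝ) = (novelty V M₂ : ℝ) +
      ∑ Q, (V \ U).indicator (fun Q => (M₂ Q : ℝ)) Q := by
  rw [novelty_cast, novelty_cast]
  have hsub : Vᶜ ⊆ Uᶜ := Set.compl_subset_compl.mpr h
  have hdiff : Uᶜ \ Vᶜ = V \ U := by ext x; simp [Set.mem_diff]; tauto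
  rw [Finset.sum_congr rfl (fun x _ => indicator_split_pt Vᶜ Uᶜ hsub _ x),
    Finset.sum_add_distrib, hdiff]

lemma one_le_novelty (U : Set Ψ) (M₂ : Ψ → ℕ) (P : Ψ) (hP : P ∉ U) (h1 : 1 ≤ M₂ P) :
    1 ≤ novelty U M₂ := by
  have : Uᶜ.indicator M₂ P = M₂ P := Set.indicator_of_mem (Set.mem_compl hP) M₂
  calc 1 ≤ Uᶜ.indicator M₂ P := this ▸ h1
    _ ≤ ∑ Q, Uᶜ.indicator M₂ Q :=
      Finset.single_le_sum (fun _ _ => Nat.zero_le _) (Finset.mem_univ P)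

end Aux


section RunAux
variable {Ψ₀ Ψ : Type*} [Fintype Ψ₀] [Fintype Ψ]
variable {pol : Ψ → Ψ₀ → ℕ} {S : Set Ψ} {μ : Ψ → ℝ} {r : ℕ}

lemma run_T_mono (run : LevelizingRun pol S μ r) :
    ∀ a b : ℕ, a ≤ b → b ≤ r → run.T a ⊆ run.T b := by
  intro a b hab hbr
  induction b with
  | zero => simpa [Nat.le_zero.mp hab] using subset_rfl
  | succ n ih =>
    rcases Nat.lt_or_ge a (n+1) with h | h
    · exact (ih (Nat.lt_succ_iff.mp h) (le_trans (Nat.le_succ n) hbr)).trans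
        (run.T_strict n (Nat.lt_of_lt_of_le (Nat.lt_succ_self n) hbr)).subset
    · have : a = n + 1 := le_antisymm hab h
      simp [this]

lemma exists_step (run : LevelizingRun pol S μ r) (i j : ℕ) (hij : i ≤ j) (Q : Ψ)
    (hQi : Q ∉ run.T i) (hQj : Q ∈ run.T j) :
    ∃ j'', i ≤ j'' ∧ j'' < j ∧ Q ∉ run.T j'' ∧ Q ∈ run.T (j'' + 1) := by
  classical
  have hlt : i < j := by
    rcases Nat.lt_or_ge i j with h | h
    · exact h
    · exact absurd ((le_antisymm hij h) ▸ hQj) hQi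
  have hex : ∃ k, Q ∈ run.T (i + k + 1) ∧ i + k + 1 ≤ j := by
    refine ⟨j - i - 1, ?_, by omega⟩
    have heqj : i + (j - i - 1) + 1 = j := by omega
    rw [heqj]; exact hQj
  obtain ⟨h1, h2⟩ := Nat.find_spec hex
  refine ⟨i + Nat.find hex, Nat.le_add_right _ _, by omega, ?_, h1⟩
  rcases Nat.eq_zero_or_pos (Nat.find hex) with h0 | h0
  · rw [h0]; simpa using hQi
  · intro hmem
    refine Nat.find_min hex (show Nat.find hex - 1 < Nat.find hex by omega) ⟨?_, by omega⟩
    have : i + (Nat.find hex - 1) + 1 = i + Nat.find hex := by omega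
    rw [this]; exact hmem

lemma lev_step (run : LevelizingRun pol S μ r) (j : ℕ) (h : j + 1 < r) :
    run.lev j ≤ run.lev (j + 1) := by
  obtain ⟨M₁, M₂, hs, hrec, hnov, heq⟩ := run.lev_attained (j+1) h
  have hjr : j < r := by omega
  have hsub : run.T j ⊆ run.T (j+1) := (run.T_strict j hjr).subset
  set L1 : ℝ := (novelty (run.T (j+1)) M₂ : ℝ) with hL1
  have hL1pos : 0 < L1 := by
    have : 0 < novelty (run.T (j+1)) M₂ := Nat.pos_of_ne_zero hnov
    rw [hL1]; exact_mod_cast this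
  set s : ℝ := ∑ Q, (run.T (j+1) \ run.T j).indicator (fun Q => (M₂ Q : ℝ)) Q with hs'
  have hs0 : 0 ≤ s := Finset.sum_nonneg fun x _ =>
    Set.indicator_nonneg (fun q _ => Nat.cast_nonneg _) x
  have himb : imbalance (run.T j) μ run.ν M₁ M₂ =
      run.lev (j+1) * L1 + run.lev j * s := by
    rw [imbalance_split (run.T j) (run.T (j+1)) hsub]
    have h1 : imbalance (run.T (j+1)) μ run.ν M₁ M₂ = run.lev (j+1) * L1 := by
      field_simp at heq ⊢
      linarith [heq]
    have h2 : ∑ Q, (run.T (j+1) \ run.T j).indicator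
        (fun Q => (M₂ Q : ℝ) * run.ν Q) Q = run.lev j * s := by
      rw [hs', Finset.mul_sum]
      refine Finset.sum_congr rfl fun x _ => ?_
      by_cases hx : x ∈ run.T (j+1) \ run.T j
      · rw [Set.indicator_of_mem hx, Set.indicator_of_mem hx,
          run.nu_new j hjr x hx.1 hx.2]; ring
      · simp [Set.indicator_of_notMem hx]
    rw [h1, h2]
  have hnovj : (novelty (run.T j) M₂ : ℝ) = L1 + s := novelty_split_s5 _ _ hsub M₂
  have hnovjpos : (0:ℝ) < (novelty (run.T j) M₂ : ℝ) := by rw [hnovj]; linarith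
  have hnovjne : novelty (run.T j) M₂ ≠ 0 := by
    intro h0; rw [h0] at hnovjpos; simp at hnovjpos
  have hle := run.lev_le j hjr M₁ M₂ hs hrec hnovjne
  rw [le_div_iff₀ hnovjpos, hnovj, himb] at hle
  nlinarith

lemma lev_mono (run : LevelizingRun pol S μ r) (a b : ℕ) (hab : a ≤ b) (hb : b < r) :
    run.lev a ≤ run.lev b := by
  induction b with
  | zero => simp [Nat.le_zero.mp hab]
  | succ n ih =>
    rcases Nat.lt_or_ge a (n+1) with h | h
    · exact (ih (Nat.lt_succ_iff.mp h) (by omega)).trans (lev_step run n hb)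
    · have : a = n + 1 := le_antisymm hab h
      simp [this]

lemma ratio_le (run : LevelizingRun pol S μ r) (i j : ℕ) (hij : i ≤ j) (hj : j < r)
    (M₁ M₂ : Ψ → ℕ) (hnov : novelty (run.T j) M₂ ≠ 0)
    (heq : imbalance (run.T j) μ run.ν M₁ M₂ / (novelty (run.T j) M₂ : ℝ) = run.lev j)
    (hν : ∀ Q ∈ run.T j, Q ∉ run.T i → run.ν Q ≤ run.lev j) :
    imbalance (run.T i) μ run.ν M₁ M₂ / (novelty (run.T i) M₂ : ℝ) ≤ run.lev j := by
  have hsub : run.T i ⊆ run.T j := run_T_mono run i j hij (le_of_lt hj)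
  set L1 : ℝ := (novelty (run.T j) M₂ : ℝ) with hL1
  have hL1pos : 0 < L1 := by
    have : 0 < novelty (run.T j) M₂ := Nat.pos_of_ne_zero hnov
    rw [hL1]; exact_mod_cast this
  set s : ℝ := ∑ Q, (run.T j \ run.T i).indicator (fun Q => (M₂ Q : ℝ)) Q with hs'
  have hs0 : 0 ≤ s := Finset.sum_nonneg fun x _ =>
    Set.indicator_nonneg (fun q _ => Nat.cast_nonneg _) x
  have himbV : imbalance (run.T j) μ run.ν M₁ M₂ = run.lev j * L1 := by
    field_simp at heq ⊢
    linarith [heq]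
  have hbound : ∑ Q, (run.T j \ run.T i).indicator
      (fun Q => (M₂ Q : ℝ) * run.ν Q) Q ≤ run.lev j * s := by
    rw [hs', Finset.mul_sum]
    refine Finset.sum_le_sum fun x _ => ?_
    by_cases hx : x ∈ run.T j \ run.T i
    · rw [Set.indicator_of_mem hx, Set.indicator_of_mem hx]
      have := hν x hx.1 hx.2
      nlinarith [(Nat.cast_nonneg (M₂ x) : (0:ℝ) ≤ (M₂ x : ℝ))]
    · simp [Set.indicator_of_notMem hx]
  have hnovi : (novelty (run.T i) M₂ : ℝ) = L1 + s := novelty_split_s5 _ _ hsub M₂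
  have hipos : (0:ℝ) < (novelty (run.T i) M₂ : ℝ) := by rw [hnovi]; linarith
  rw [div_le_iff₀ hipos, hnovi]
  have := imbalance_split (run.T i) (run.T j) hsub μ run.ν M₁ M₂
  rw [this, himbV]
  nlinarith

end RunAux


/-- for any level `i` of a levelizing run (here `run.T i`, `run.lev i` are
the paper's `T_{i+1}`, `μ_{i+1}`, so `i < r` ranges over the paper's levels `1,…,r`) and
any polymer `P` not yet levelized, the quantity
`μ̃_i(P) = inf { k_{T_i}(α)/l_{T_i}(α) : α canonical producing P }`
satisfies `ν(P) ≥ μ̃_i(P) ≥ μ_i`. -/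
theorem heuristic_bound {Ψ₀ Ψ : Type*} [Fintype Ψ₀] [Fintype Ψ]
    (pol : Ψ → Ψ₀ → ℕ) (S : Set Ψ) (μ : Ψ → ℝ)
    (hOT : onTarget pol S μ) (hSt : stableSet pol S μ)
    (r : ℕ) (run : LevelizingRun pol S μ r) (i : ℕ) (hi : i < r)
    (P : Ψ) (hP : P ∉ run.T i) :
    sInf {q : ℝ | ∃ M₁ M₂ : Ψ → ℕ, supportedOn S M₁ ∧ reconfig pol M₁ M₂ ∧ 1 ≤ M₂ P ∧
        q = imbalance (run.T i) μ run.ν M₁ M₂ / (novelty (run.T i) M₂ : ℝ)} ≤ run.ν P ∧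
    run.lev i ≤
      sInf {q : ℝ | ∃ M₁ M₂ : Ψ → ℕ, supportedOn S M₁ ∧ reconfig pol M₁ M₂ ∧ 1 ≤ M₂ P ∧
        q = imbalance (run.T i) μ run.ν M₁ M₂ / (novelty (run.T i) M₂ : ℝ)} := by
  classical
  set Qs : Set ℝ := {q : ℝ | ∃ M₁ M₂ : Ψ → ℕ, supportedOn S M₁ ∧ reconfig pol M₁ M₂ ∧
      1 ≤ M₂ P ∧
      q = imbalance (run.T i) μ run.ν M₁ M₂ / (novelty (run.T i) M₂ : ℝ)} with hQs
  have hne : Qs.Nonempty := by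
    obtain ⟨M, M', hsupp, hM'P, hrec⟩ := hOT.2.1 P
    exact ⟨_, M, M', hsupp, hrec, hM'P, rfl⟩
  have hlb : ∀ q ∈ Qs, run.lev i ≤ q := by
    rintro q ⟨M₁, M₂, hsupp, hrec, hM2P, rfl⟩
    have hnov : novelty (run.T i) M₂ ≠ 0 :=
      Nat.one_le_iff_ne_zero.mp (one_le_novelty _ _ P hP hM2P)
    exact run.lev_le i hi M₁ M₂ hsupp hrec hnov
  have hbdd : BddBelow Qs := ⟨run.lev i, hlb⟩
  constructor
  · -- sInf Qs ≤ run.ν P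
    have hPr : P ∈ run.T r := by rw [run.T_last]; trivial
    obtain ⟨j, hij, hjr, hPj, hPj1⟩ := exists_step run i r (le_of_lt hi) P hP hPr
    have hνP : run.ν P = run.lev j := run.nu_new j hjr P hPj1 hPj
    obtain ⟨-, M₁, M₂, hsupp, hrec, hnov, heq, hM2P⟩ :=
      (run.new_mem j hjr P).mp ⟨hPj1, hPj⟩
    have hν : ∀ Q ∈ run.T j, Q ∉ run.T i → run.ν Q ≤ run.lev j := by
      intro Q hQj hQi
      obtain ⟨j', hij', hj'j, hQj', hQj'1⟩ := exists_step run i j hij Q hQi hQj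
      rw [run.nu_new j' (lt_trans hj'j hjr) Q hQj'1 hQj']
      exact lev_mono run j' j (le_of_lt hj'j) hjr
    have hq : imbalance (run.T i) μ run.ν M₁ M₂ / (novelty (run.T i) M₂ : ℝ) ∈ Qs :=
      ⟨M₁, M₂, hsupp, hrec, hM2P, rfl⟩
    calc sInf Qs ≤ _ := csInf_le hbdd hq
      _ ≤ run.lev j := ratio_le run i j hij hjr M₁ M₂ hnov heq hν
      _ = run.ν P := hνP.symm
  · exact le_csInf hne hlb
end

section
/- Let S ⊆ Ψ with μ : S → (0,1] be on-target, let T ⊆ T' ⊆ Ψ with S ⊆ T, and let ν : T' → ℝ satisfy ν = μ on S. Suppose there is a real μ* such that ν(P) = μ* for every P ∈ T' ∖ T. Let α : M₁ → M₂ be a canonical reaction with l_{T'}(α) ≠ 0 (hence also l_T(α) ≠ 0), and assume μ* ≤ k_T(α)/l_T(α). Then k_T(α)/l_T(α) ≤ k_{T'}(α)/l_{T'}(α). -/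
open scoped BigOperators

/-- monotonicity of the ratio, Lemma on nondecreasing ratios: if `ν` is
constantly `μ*` on `T' ∖ T` and `μ* ≤ k_T(α)/l_T(α)` for a canonical reaction `α` with
`l_{T'}(α) ≠ 0`, then `k_T(α)/l_T(α) ≤ k_{T'}(α)/l_{T'}(α)`. -/
theorem ratio_nondecreasing {Ψ₀ Ψ : Type*} [Fintype Ψ₀] [Fintype Ψ]
    (pol : Ψ → Ψ₀ → ℕ) (S T T' : Set Ψ) (μ ν : Ψ → ℝ)
    (hOT : onTarget pol S μ) (hST : S ⊆ T) (hTT' : T ⊆ T') (hT'Ψ : T' ⊆ Set.univ)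
    (hνμ : ∀ P ∈ S, ν P = μ P)
    (μstar : ℝ) (hstar : ∀ P ∈ T', P ∉ T → ν P = μstar)
    (M₁ M₂ : Ψ → ℕ) (hM₁ : supportedOn S M₁) (hre : reconfig pol M₁ M₂)
    (hl' : novelty T' M₂ ≠ 0)
    (hμstar : μstar ≤ imbalance T μ ν M₁ M₂ / (novelty T M₂ : ℝ)) :
    imbalance T μ ν M₁ M₂ / (novelty T M₂ : ℝ) ≤
      imbalance T' μ ν M₁ M₂ / (novelty T' M₂ : ℝ) := by

  set d : ℝ := ∑ P, (T' \ T).indicator (fun Q => (M₂ Q : ℝ)) P with hd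
  have hdnn : 0 ≤ d := Finset.sum_nonneg (fun P _ => Set.indicator_nonneg (fun Q _ => Nat.cast_nonneg _) P)
  have h1 : (novelty T M₂ : ℝ) = (novelty T' M₂ : ℝ) + d := by
    simp only [novelty, Nat.cast_sum, hd, ← Finset.sum_add_distrib]
    apply Finset.sum_congr rfl
    intro P _
    by_cases hPT : P ∈ T
    · have hPT' : P ∈ T' := hTT' hPT
      simp [Set.indicator_of_notMem, hPT, hPT']
    · by_cases hPT' : P ∈ T'
      · simp [Set.indicator_of_mem, Set.indicator_of_notMem, hPT, hPT',
          Set.mem_diff, Set.mem_compl_iff]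
      · simp [Set.indicator_of_mem, Set.indicator_of_notMem, hPT, hPT',
          Set.mem_diff, Set.mem_compl_iff]
  have h2 : imbalance T' μ ν M₁ M₂ = imbalance T μ ν M₁ M₂ - μstar * d := by
    simp only [imbalance, hd, Finset.mul_sum, sub_sub, ← Finset.sum_add_distrib]
    congr 1
    apply Finset.sum_congr rfl
    intro P _
    by_cases hPT : P ∈ T
    · have hPT' : P ∈ T' := hTT' hPT
      simp [Set.indicator_of_mem, Set.indicator_of_notMem, hPT, hPT', Set.mem_diff]
    · by_cases hPT' : P ∈ T'
      · have : ν P = μstar := hstar P hPT' hPT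
        simp [Set.indicator_of_mem, Set.indicator_of_notMem, hPT, hPT', Set.mem_diff, this]
        ring
      · simp [Set.indicator_of_notMem, hPT, hPT', Set.mem_diff]
  have hl'pos : (0 : ℝ) < (novelty T' M₂ : ℝ) := by
    exact_mod_cast Nat.pos_of_ne_zero hl'
  have hlpos : (0 : ℝ) < (novelty T M₂ : ℝ) := by
    rw [h1]; linarith
  have hk : μstar * (novelty T M₂ : ℝ) ≤ imbalance T μ ν M₁ M₂ :=
    (le_div_iff₀ hlpos).mp hμstar
  rw [div_le_div_iff₀ hlpos hl'pos, h2, h1]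
  rw [h1] at hk
  nlinarith [mul_nonneg hdnn (sub_nonneg.mpr hk)]
end

section
/- Let S ⊆ Ψ satisfy: (i) for every M ∈ ℕ^S and every reaction M → M', |M| ≥ |M'|; (ii) for every M ∈ ℕ^S and every reaction M → M' such that M'(P) ≥ 1 for some P ∉ S, |M| > |M'| (i.e., S is TBN-stability closed); and (iii) for every P ∈ Ψ there exist M ∈ ℕ^S and M' ∈ ℕ^Ψ with P ∈ M' and M ≅ M'. Then S with the constant function μ ≡ 1 is on-target (in particular |M₁| = |M₂| whenever M₁, M₂ ∈ ℕ^S and M₁ ≅ M₂) and stable (every canonical reaction α with l(α) ≠ 0 satisfies k(α)/l(α) > 1). -/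
open scoped BigOperators

/-- a TBN-stability closed set `S` (conditions (i) and (ii)) satisfying
condition (1) of on-targetness (condition (iii)) is on-target with the constant
exponents `μ ≡ 1` (uniform) and stable. -/
theorem tbn_stability_closed_implies_stable {Ψ₀ Ψ : Type*} [Fintype Ψ₀] [Fintype Ψ]
    (pol : Ψ → Ψ₀ → ℕ) (S : Set Ψ)
    (h1 : ∀ M M' : Ψ → ℕ, supportedOn S M → reconfig pol M M' →
      ∑ P, M' P ≤ ∑ P, M P)
    (h2 : ∀ M M' : Ψ → ℕ, supportedOn S M → reconfig pol M M' →
      (∃ P ∉ S, 1 ≤ M' P) → ∑ P, M' P < ∑ P, M P)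
    (h3 : ∀ P : Ψ, ∃ M M' : Ψ → ℕ, supportedOn S M ∧ 1 ≤ M' P ∧ reconfig pol M M') :
    onTarget pol S (fun _ => 1) ∧ stableSet pol S (fun _ => 1) := by
  constructor
  · refine ⟨fun P _ => ⟨one_pos, le_refl 1⟩, h3, ?_⟩
    intro M₁ M₂ hs1 hs2 hr
    have h12 := h1 M₁ M₂ hs1 hr
    have h21 := h1 M₂ M₁ hs2 (fun m => (hr m).symm)
    have heq : ∑ P, M₁ P = ∑ P, M₂ P := le_antisymm h21 h12
    simp only [muSum, mul_one]
    exact_mod_cast heq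
  · intro M₁ M₂ hs1 hr hnov
    classical
    have hex : ∃ P ∉ S, 1 ≤ M₂ P := by
      by_contra h
      push_neg at h
      apply hnov
      unfold novelty
      apply Finset.sum_eq_zero
      intro P _
      by_cases hP : P ∈ S
      · simp [Set.indicator_of_notMem, hP]
      · have h0 : M₂ P = 0 := by have := h P hP; omega
        simp [Set.indicator_apply, h0]
    have hlt := h2 M₁ M₂ hs1 hr hex
    have hn : 0 < novelty S M₂ := Nat.pos_of_ne_zero hnov
    have hsplit : (∑ P, S.indicator (fun Q => (M₂ Q : ℝ) * 1) P) + (novelty S M₂ : ℝ)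
        = ∑ P, (M₂ P : ℝ) := by
      unfold novelty
      push_cast
      rw [← Finset.sum_add_distrib]
      apply Finset.sum_congr rfl
      intro P _
      by_cases hP : P ∈ S
      · simp [Set.indicator_of_mem, hP, Set.indicator_of_notMem]
      · simp [Set.indicator_of_notMem, hP, Set.indicator_of_mem]
    rw [lt_div_iff₀ (by exact_mod_cast hn), one_mul]
    unfold imbalance muSum
    simp only [mul_one]
    simp only [mul_one] at hsplit
    have h1r : (∑ P, (M₂ P : ℝ)) < ∑ P, (M₁ P : ℝ) := by exact_mod_cast hlt
    linarith
end

section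
/- Let S ⊆ Ψ be TBN-stability closed and satisfy: for every P ∈ Ψ there exist M ∈ ℕ^S and M' ∈ ℕ^Ψ with P ∈ M' and M ≅ M'. For a canonical reaction α : M₁ → M₂ define the entropy loss e(α) = |M₁| − |M₂|, and set μ₁ = 1 + inf{ e(α)/l(α) : α canonical with l(α) ≠ 0 }. Then for every real c with 0 < c < 1 there exists a configuration x ∈ (0,1)^Ψ with x_P = c for every P ∈ S and x_P ≤ c^{μ₁} for every P ∉ S, such that g(x) ≤ g(x') for every x' ∈ (0,1)^Ψ with A·x' = A·x. -/
open scoped BigOperators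

universe u

lemma fm_sep_lemma {P Q : Type*} [Fintype P] [Fintype Q]
    (f : P → ℝ) (g : Q → ℝ) (h : ∀ p q, f p ≤ g q) :
    ∃ w : ℝ, (∀ p, f p ≤ w) ∧ (∀ q, w ≤ g q) := by
  rcases isEmpty_or_nonempty P with hP | hP
  · rcases isEmpty_or_nonempty Q with hQ | hQ
    · exact ⟨0, fun p => (IsEmpty.false p).elim, fun q => (IsEmpty.false q).elim⟩
    · exact ⟨Finset.univ.inf' Finset.univ_nonempty g, fun p => (IsEmpty.false p).elim,
        fun q => Finset.inf'_le _ (Finset.mem_univ q)⟩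
  · refine ⟨Finset.univ.sup' Finset.univ_nonempty f,
      fun p => Finset.le_sup' _ (Finset.mem_univ p), fun q => ?_⟩
    exact Finset.sup'_le _ _ fun p _ => h p q

lemma fm_expand {ι : Type u} [Fintype ι] {K : Type*} [Field K] [LinearOrder K] [IsStrictOrderedRing K]
    (d : ι → ℚ) (Y : ι ⊕ ι × ι → K) (v : ι → K) [DecidableEq ι] [DecidablePred fun q : ℚ => 0 < q] [DecidablePred fun q : ℚ => q < 0] [DecidablePred fun q : ℚ => q = 0] :
    ∑ i, ((if d i = 0 then Y (Sum.inl i) else 0)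
      + (if 0 < d i then (∑ q, if d q < 0 then Y (Sum.inr (i, q)) else 0) / ((d i : K)) else 0)
      + (if d i < 0 then (∑ p, if 0 < d p then Y (Sum.inr (p, i)) else 0) / (-(d i : K)) else 0)) * v i
    = (∑ i, if d i = 0 then Y (Sum.inl i) * v i else 0)
    + ((∑ i, ∑ q, if 0 < d i ∧ d q < 0 then Y (Sum.inr (i, q)) * (v i / (d i : K)) else 0)
    + (∑ i, ∑ p, if 0 < d p ∧ d i < 0 then Y (Sum.inr (p, i)) * (-(v i) / (d i : K)) else 0)) := by
  rw [← Finset.sum_add_distrib, ← Finset.sum_add_distrib]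
  refine Finset.sum_congr rfl fun i _ => ?_
  rcases lt_trichotomy (d i) 0 with hneg | hzero | hpos
  · have h1 : ¬ d i = 0 := ne_of_lt hneg
    have h2 : ¬ 0 < d i := not_lt.2 hneg.le
    rw [if_neg h1, if_neg h2, if_pos hneg, if_neg h1]
    have e2 : ∀ q : ι, (if 0 < d i ∧ d q < 0 then Y (Sum.inr (i, q)) * (v i / (d i : K)) else 0) = 0 := by
      intro q; rw [if_neg (fun hc => h2 hc.1)]
    rw [Finset.sum_eq_zero (fun q _ => e2 q)]
    have e3 : ∀ p : ι, (if 0 < d p ∧ d i < 0 then Y (Sum.inr (p, i)) * (-(v i) / (d i : K)) else 0)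
        = (if 0 < d p then Y (Sum.inr (p, i)) else 0) * (-(v i) / (d i : K)) := by
      intro p
      by_cases hp : 0 < d p
      · rw [if_pos ⟨hp, hneg⟩, if_pos hp]
      · rw [if_neg (fun hc => hp hc.1), if_neg hp, zero_mul]
    rw [Finset.sum_congr rfl (fun p _ => e3 p), ← Finset.sum_mul]
    have hK : ((d i : K)) ≠ 0 := Rat.cast_ne_zero.2 h1
    rw [div_neg]
    ring
  · have h2 : ¬ 0 < d i := by rw [hzero]; exact lt_irrefl 0
    have h3 : ¬ d i < 0 := by rw [hzero]; exact lt_irrefl 0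
    rw [if_pos hzero, if_neg h2, if_neg h3, if_pos hzero]
    have e2 : ∀ q : ι, (if 0 < d i ∧ d q < 0 then Y (Sum.inr (i, q)) * (v i / (d i : K)) else 0) = 0 := by
      intro q; rw [if_neg (fun hc => h2 hc.1)]
    have e3 : ∀ p : ι, (if 0 < d p ∧ d i < 0 then Y (Sum.inr (p, i)) * (-(v i) / (d i : K)) else 0) = 0 := by
      intro p; rw [if_neg (fun hc => h3 hc.2)]
    rw [Finset.sum_eq_zero (fun q _ => e2 q), Finset.sum_eq_zero (fun p _ => e3 p)]
    ring
  · have h1 : ¬ d i = 0 := ne_of_gt hpos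
    have h3 : ¬ d i < 0 := not_lt.2 hpos.le
    rw [if_neg h1, if_pos hpos, if_neg h3, if_neg h1]
    have e3 : ∀ p : ι, (if 0 < d p ∧ d i < 0 then Y (Sum.inr (p, i)) * (-(v i) / (d i : K)) else 0) = 0 := by
      intro p; rw [if_neg (fun hc => h3 hc.2)]
    rw [Finset.sum_eq_zero (fun p _ => e3 p)]
    have e2 : ∀ q : ι, (if 0 < d i ∧ d q < 0 then Y (Sum.inr (i, q)) * (v i / (d i : K)) else 0)
        = (if d q < 0 then Y (Sum.inr (i, q)) else 0) * (v i / (d i : K)) := by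
      intro q
      by_cases hq : d q < 0
      · rw [if_pos ⟨hpos, hq⟩, if_pos hq]
      · rw [if_neg (fun hc => hq hc.2), if_neg hq, zero_mul]
    rw [Finset.sum_congr rfl (fun q _ => e2 q), ← Finset.sum_mul]
    have hK : ((d i : K)) ≠ 0 := Rat.cast_ne_zero.2 h1
    field_simp
    ring

theorem farkasQ : ∀ (n : ℕ) {ι : Type u} [Fintype ι] (b : ι → Fin n → ℚ) (c : ι → ℝ),
    (∃ w : Fin n → ℝ, ∀ i, c i ≤ ∑ j, (b i j : ℝ) * w j) ∨
    (∃ y : ι → ℚ, (∀ i, 0 ≤ y i) ∧ (∀ j, ∑ i, y i * b i j = 0) ∧ 0 < ∑ i, (y i : ℝ) * c i) := by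
  intro n
  induction n with
  | zero =>
    intro ι _ b c
    classical
    by_cases h : ∀ i, c i ≤ 0
    · exact Or.inl ⟨fun _ => 0, fun i => by simpa using h i⟩
    · push_neg at h
      obtain ⟨i₀, hi₀⟩ := h
      refine Or.inr ⟨fun i => if i = i₀ then 1 else 0, ?_, ?_, ?_⟩
      · intro i; dsimp only; split <;> norm_num
      · exact fun j => j.elim0
      · simpa [apply_ite (Rat.cast : ℚ → ℝ), ite_mul, Finset.sum_ite_eq'] using hi₀
  | succ n ih =>
    intro ι _ b c
    classical
    set b' : (ι ⊕ ι × ι) → Fin n → ℚ :=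
      Sum.elim (fun i j => if b i 0 = 0 then b i j.succ else 0)
        (fun pq j => if 0 < b pq.1 0 ∧ b pq.2 0 < 0 then
            b pq.1 j.succ / b pq.1 0 - b pq.2 j.succ / b pq.2 0 else 0) with hb'
    set c' : (ι ⊕ ι × ι) → ℝ :=
      Sum.elim (fun i => if b i 0 = 0 then c i else 0)
        (fun pq => if 0 < b pq.1 0 ∧ b pq.2 0 < 0 then
            c pq.1 / (b pq.1 0 : ℝ) - c pq.2 / (b pq.2 0 : ℝ) else 0) with hc'
    rcases ih b' c' with ⟨w', hw'⟩ | ⟨y', hy0, hker, hobj⟩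
    · left
      set T : ι → ℝ := fun i => ∑ j, (b i j.succ : ℝ) * w' j with hT
      have hsep : ∀ (p : {i // 0 < b i 0}) (q : {i // b i 0 < 0}),
          (c p.1 - T p.1) / (b p.1 0 : ℝ) ≤ (c q.1 - T q.1) / (b q.1 0 : ℝ) := by
        rintro ⟨p, hp⟩ ⟨q, hq⟩
        have h := hw' (Sum.inr (p, q))
        simp only [hb', hc', Sum.elim_inr, if_pos (And.intro hp hq)] at h
        have hrw : ∀ j : Fin n, ((b p j.succ / b p 0 - b q j.succ / b q 0 : ℚ) : ℝ) * w' j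
            = (b p j.succ : ℝ) * w' j / (b p 0 : ℝ) - (b q j.succ : ℝ) * w' j / (b q 0 : ℝ) := by
          intro j; push_cast; ring
        rw [Finset.sum_congr rfl fun j _ => hrw j, Finset.sum_sub_distrib] at h
        rw [← Finset.sum_div, ← Finset.sum_div] at h
        have hp' : (0:ℝ) < (b p 0 : ℝ) := by exact_mod_cast hp
        have hq' : ((b q 0 : ℚ) : ℝ) < 0 := by exact_mod_cast hq
        rw [sub_div, sub_div]
        dsimp only [hT]
        linarith
      obtain ⟨w₀, hw₀f, hw₀g⟩ := fm_sep_lemma _ _ hsep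
      refine ⟨Fin.cons w₀ w', fun i => ?_⟩
      have hsum : ∑ j : Fin (n+1), (b i j : ℝ) * (Fin.cons w₀ w' : Fin (n+1) → ℝ) j
          = (b i 0 : ℝ) * w₀ + T i := by
        rw [Fin.sum_univ_succ]
        simp [hT]
      rw [hsum]
      rcases lt_trichotomy (b i 0) 0 with hneg | hzero | hpos
      · have := hw₀g ⟨i, hneg⟩
        have hbi : ((b i 0 : ℚ) : ℝ) < 0 := by exact_mod_cast hneg
        rw [le_div_iff_of_neg hbi] at this
        nlinarith
      · have h := hw' (Sum.inl i)
        simp only [hb', hc', Sum.elim_inl, if_pos hzero] at h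
        have : T i = ∑ j, ((if b i 0 = 0 then b i j.succ else 0 : ℚ) : ℝ) * w' j := by
          rw [hT]; exact Finset.sum_congr rfl fun j _ => by rw [if_pos hzero]
        rw [hzero]
        push_cast
        rw [this]
        linarith
      · have := hw₀f ⟨i, hpos⟩
        have hbi : (0:ℝ) < ((b i 0 : ℚ) : ℝ) := by exact_mod_cast hpos
        rw [div_le_iff₀ hbi] at this
        nlinarith
    · right
      set y : ι → ℚ := fun i =>
          (if b i 0 = 0 then y' (Sum.inl i) else 0)
        + (if 0 < b i 0 then (∑ q, if b q 0 < 0 then y' (Sum.inr (i, q)) else 0) / (b i 0) else 0)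
        + (if b i 0 < 0 then (∑ p, if 0 < b p 0 then y' (Sum.inr (p, i)) else 0) / (-(b i 0)) else 0)
        with hy
      have E := fm_expand (K := ℚ) (fun i => b i 0) y'
      simp only [Rat.cast_id] at E
      refine ⟨y, ?_, ?_, ?_⟩
      · intro i
        simp only [hy]
        have A : (0:ℚ) ≤ if b i 0 = 0 then y' (Sum.inl i) else 0 := by
          split_ifs; exacts [hy0 _, le_refl 0]
        have B : (0:ℚ) ≤ if 0 < b i 0 then
            (∑ q, if b q 0 < 0 then y' (Sum.inr (i, q)) else 0) / (b i 0) else 0 := by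
          split_ifs with h
          · exact div_nonneg (Finset.sum_nonneg fun q _ => by
              split_ifs; exacts [hy0 _, le_refl 0]) (le_of_lt h)
          · exact le_refl 0
        have C : (0:ℚ) ≤ if b i 0 < 0 then
            (∑ p, if 0 < b p 0 then y' (Sum.inr (p, i)) else 0) / (-(b i 0)) else 0 := by
          split_ifs with h
          · exact div_nonneg (Finset.sum_nonneg fun p _ => by
              split_ifs; exacts [hy0 _, le_refl 0]) (le_of_lt (neg_pos.2 h))
          · exact le_refl 0
        linarith
      · intro j
        simp only [hy]
        rw [E (fun i => b i j)]
        refine Fin.cases ?_ ?_ j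
        · -- j = 0
          have e1 : (∑ i, if b i 0 = 0 then y' (Sum.inl i) * b i 0 else 0) = 0 :=
            Finset.sum_eq_zero fun i _ => by
              split_ifs with h
              exacts [by rw [h, mul_zero], rfl]
          have e2 : (∑ i, ∑ q, if 0 < b i 0 ∧ b q 0 < 0 then
                y' (Sum.inr (i, q)) * (b i 0 / b i 0) else 0)
              = ∑ i, ∑ q, if 0 < b i 0 ∧ b q 0 < 0 then y' (Sum.inr (i, q)) else 0 :=
            Finset.sum_congr rfl fun i _ => Finset.sum_congr rfl fun q _ => by
              split_ifs with h
              exacts [by rw [div_self (ne_of_gt h.1), mul_one], rfl]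
          have hcomm : (∑ i, ∑ p, if 0 < b p 0 ∧ b i 0 < 0 then
                y' (Sum.inr (p, i)) * (-(b i 0) / b i 0) else 0)
              = ∑ p, ∑ q, if 0 < b p 0 ∧ b q 0 < 0 then
                y' (Sum.inr (p, q)) * (-(b q 0) / b q 0) else 0 := Finset.sum_comm
          have e3 : (∑ p, ∑ q, if 0 < b p 0 ∧ b q 0 < 0 then
                y' (Sum.inr (p, q)) * (-(b q 0) / b q 0) else 0)
              = - ∑ i, ∑ q, if 0 < b i 0 ∧ b q 0 < 0 then y' (Sum.inr (i, q)) else 0 := by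
            rw [← Finset.sum_neg_distrib]
            refine Finset.sum_congr rfl fun p _ => ?_
            rw [← Finset.sum_neg_distrib]
            refine Finset.sum_congr rfl fun q _ => ?_
            split_ifs with h
            · rw [neg_div, div_self (ne_of_lt h.2), mul_neg, mul_one]
            · rw [neg_zero]
          rw [e1, e2, hcomm, e3]
          ring
        · -- j = k.succ
          intro k
          have H := hker k
          rw [Fintype.sum_sum_type, Fintype.sum_prod_type] at H
          simp only [hb', Sum.elim_inl, Sum.elim_inr] at H
          have t1 : (∑ i, if b i 0 = 0 then y' (Sum.inl i) * b i k.succ else 0)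
              = ∑ i, y' (Sum.inl i) * (if b i 0 = 0 then b i k.succ else 0) :=
            Finset.sum_congr rfl fun i _ => by
              split_ifs with h
              exacts [rfl, by rw [mul_zero]]
          have hcomm : (∑ i, ∑ p, if 0 < b p 0 ∧ b i 0 < 0 then
                y' (Sum.inr (p, i)) * (-(b i k.succ) / b i 0) else 0)
              = ∑ p, ∑ q, if 0 < b p 0 ∧ b q 0 < 0 then
                y' (Sum.inr (p, q)) * (-(b q k.succ) / b q 0) else 0 := Finset.sum_comm
          have t23 : (∑ i, ∑ q, if 0 < b i 0 ∧ b q 0 < 0 then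
                y' (Sum.inr (i, q)) * (b i k.succ / b i 0) else 0)
              + (∑ p, ∑ q, if 0 < b p 0 ∧ b q 0 < 0 then
                y' (Sum.inr (p, q)) * (-(b q k.succ) / b q 0) else 0)
              = ∑ p, ∑ q, y' (Sum.inr (p, q)) *
                (if 0 < b p 0 ∧ b q 0 < 0 then b p k.succ / b p 0 - b q k.succ / b q 0 else 0) := by
            rw [← Finset.sum_add_distrib]
            refine Finset.sum_congr rfl fun p _ => ?_
            rw [← Finset.sum_add_distrib]
            refine Finset.sum_congr rfl fun q _ => ?_
            split_ifs with h
            · ring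
            · simp
          rw [hcomm, t1]
          linarith [H, t23]
      · -- objective
        have E' := fm_expand (K := ℝ) (fun i => b i 0) (fun i' => (y' i' : ℝ)) (fun i => c i)
        have hcast : ∑ i, (y i : ℝ) * c i
            = ∑ i, (((if b i 0 = 0 then (y' (Sum.inl i) : ℝ) else 0)
              + (if 0 < b i 0 then (∑ q, if b q 0 < 0 then (y' (Sum.inr (i, q)) : ℝ) else 0) / ((b i 0 : ℝ)) else 0)
              + (if b i 0 < 0 then (∑ p, if 0 < b p 0 then (y' (Sum.inr (p, i)) : ℝ) else 0) / (-((b i 0 : ℝ))) else 0)) * c i) := by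
          refine Finset.sum_congr rfl fun i _ => ?_
          simp only [hy]
          push_cast [apply_ite (Rat.cast : ℚ → ℝ)]
          ring
        rw [hcast, E']
        have H := hobj
        rw [Fintype.sum_sum_type, Fintype.sum_prod_type] at H
        simp only [hc', Sum.elim_inl, Sum.elim_inr] at H
        have t1 : (∑ i, if b i 0 = 0 then (y' (Sum.inl i) : ℝ) * c i else 0)
            = ∑ i, (y' (Sum.inl i) : ℝ) * (if b i 0 = 0 then c i else 0) :=
          Finset.sum_congr rfl fun i _ => by
            split_ifs with h
            exacts [rfl, by rw [mul_zero]]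
        have hcomm : (∑ i, ∑ p, if 0 < b p 0 ∧ b i 0 < 0 then
              (y' (Sum.inr (p, i)) : ℝ) * (-(c i) / (b i 0 : ℝ)) else 0)
            = ∑ p, ∑ q, if 0 < b p 0 ∧ b q 0 < 0 then
              (y' (Sum.inr (p, q)) : ℝ) * (-(c q) / (b q 0 : ℝ)) else 0 := Finset.sum_comm
        have t23 : (∑ i, ∑ q, if 0 < b i 0 ∧ b q 0 < 0 then
              (y' (Sum.inr (i, q)) : ℝ) * (c i / (b i 0 : ℝ)) else 0)
            + (∑ p, ∑ q, if 0 < b p 0 ∧ b q 0 < 0 then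
              (y' (Sum.inr (p, q)) : ℝ) * (-(c q) / (b q 0 : ℝ)) else 0)
            = ∑ p, ∑ q, (y' (Sum.inr (p, q)) : ℝ) *
              (if 0 < b p 0 ∧ b q 0 < 0 then c p / (b p 0 : ℝ) - c q / (b q 0 : ℝ) else 0) := by
          rw [← Finset.sum_add_distrib]
          refine Finset.sum_congr rfl fun p _ => ?_
          rw [← Finset.sum_add_distrib]
          refine Finset.sum_congr rfl fun q _ => ?_
          split_ifs with h
          · ring
          · simp
        rw [hcomm, t1]
        linarith [H, t23]

/-- user-friendly corollary: for a TBN-stability closed `S` (with every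
polymer reachable from `S`), setting `μ₁ = 1 + inf{ e(α)/l(α) }` over canonical
reactions with `l(α) ≠ 0` (where `e(α) = |M₁| - |M₂|` is the entropy loss), every
`0 < c < 1` admits an equilibrium configuration with all polymers of `S` at
concentration exactly `c` and every off-target polymer at concentration `≤ c^{μ₁}`. -/
theorem tbn_concentration_bound {Ψ₀ Ψ : Type*} [Fintype Ψ₀] [Fintype Ψ]
    (pol : Ψ → Ψ₀ → ℕ) (S : Set Ψ)
    (h1 : ∀ M M' : Ψ → ℕ, supportedOn S M → reconfig pol M M' →
      ∑ P, M' P ≤ ∑ P, M P)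
    (h2 : ∀ M M' : Ψ → ℕ, supportedOn S M → reconfig pol M M' →
      (∃ P ∉ S, 1 ≤ M' P) → ∑ P, M' P < ∑ P, M P)
    (h3 : ∀ P : Ψ, ∃ M M' : Ψ → ℕ, supportedOn S M ∧ 1 ≤ M' P ∧ reconfig pol M M') :
    ∀ c : ℝ, 0 < c → c < 1 →
      ∃ x : Ψ → ℝ, (∀ P, x P ∈ Set.Ioo (0:ℝ) 1) ∧ (∀ P ∈ S, x P = c) ∧
        (∀ P ∉ S, x P ≤ (c : ℝ) ^
          (1 + sInf {q : ℝ | ∃ M₁ M₂ : Ψ → ℕ, supportedOn S M₁ ∧ reconfig pol M₁ M₂ ∧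
            novelty S M₂ ≠ 0 ∧
            q = ((∑ P, (M₁ P : ℝ)) - ∑ P, (M₂ P : ℝ)) / (novelty S M₂ : ℝ)})) ∧
        ∀ x' : Ψ → ℝ, (∀ P, x' P ∈ Set.Ioo (0:ℝ) 1) →
          massVec pol x' = massVec pol x → gCost x ≤ gCost x' := by
  classical
  intro c hc hc1
  set Q : Set ℝ := {q : ℝ | ∃ M₁ M₂ : Ψ → ℕ, supportedOn S M₁ ∧ reconfig pol M₁ M₂ ∧
      novelty S M₂ ≠ 0 ∧
      q = ((∑ P, (M₁ P : ℝ)) - ∑ P, (M₂ P : ℝ)) / (novelty S M₂ : ℝ)} with hQdef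
  set δ : ℝ := sInf Q with hδ
  -- basic facts about the set Q
  have hnovelem : ∀ M₂ : Ψ → ℕ, novelty S M₂ ≠ 0 → ∃ P ∉ S, 1 ≤ M₂ P := by
    intro M₂ hnov
    by_contra hcon
    push_neg at hcon
    apply hnov
    unfold novelty
    refine Finset.sum_eq_zero fun P _ => ?_
    rw [Set.indicator_apply]
    split_ifs with hP
    · have := hcon P (Set.mem_compl_iff _ _ |>.1 hP)
      omega
    · rfl
  have hQpos : ∀ q ∈ Q, 0 < q := by
    rintro q ⟨M₁, M₂, hsup, hrec, hnov, rfl⟩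
    have hlt := h2 M₁ M₂ hsup hrec (hnovelem M₂ hnov)
    apply div_pos
    · have h1' : ((∑ P, M₂ P : ℕ) : ℝ) < ((∑ P, M₁ P : ℕ) : ℝ) := by exact_mod_cast hlt
      push_cast at h1'
      linarith
    · exact_mod_cast Nat.pos_of_ne_zero hnov
  have hbdd : BddBelow Q := ⟨0, fun q hq => (hQpos q hq).le⟩
  have hδ0 : 0 ≤ δ := Real.sInf_nonneg fun q hq => (hQpos q hq).le
  -- Farkas setup
  set n := Fintype.card Ψ₀ with hn
  set e : Ψ₀ ≃ Fin n := Fintype.equivFin Ψ₀ with he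
  set B : (Ψ ⊕ Ψ) → Fin n → ℚ := Sum.elim (fun P j => (pol P (e.symm j) : ℚ))
      (fun P j => if P ∈ S then -(pol P (e.symm j) : ℚ) else 0) with hB
  set C : (Ψ ⊕ Ψ) → ℝ := Sum.elim (fun P => if P ∈ S then 1 else 1 + δ)
      (fun _ => -1) with hC
  rcases farkasQ n B C with ⟨w', hw'⟩ | ⟨y, hy0, hker, hobj⟩
  · -- feasible: build the configuration
    set t : Ψ → ℝ := fun P => ∑ m, (pol P m : ℝ) * w' (e m) with ht
    have hBt : ∀ P : Ψ, (∑ j, ((B (Sum.inl P) j : ℚ) : ℝ) * w' j) = t P := by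
      intro P
      have hre := Equiv.sum_comp e.symm (fun m => (pol P m : ℝ) * w' (e m))
      show (∑ j, ((B (Sum.inl P) j : ℚ) : ℝ) * w' j) = ∑ m, (pol P m : ℝ) * w' (e m)
      rw [← hre]
      refine Finset.sum_congr rfl fun j _ => ?_
      rw [hB]
      simp only [Sum.elim_inl, Equiv.apply_symm_apply]
      push_cast
      ring
    have hBt' : ∀ P : Ψ, P ∈ S → (∑ j, ((B (Sum.inr P) j : ℚ) : ℝ) * w' j) = -(t P) := by
      intro P hP
      have hre := Equiv.sum_comp e.symm (fun m => -((pol P m : ℝ) * w' (e m)))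
      show (∑ j, ((B (Sum.inr P) j : ℚ) : ℝ) * w' j) = -(∑ m, (pol P m : ℝ) * w' (e m))
      rw [← Finset.sum_neg_distrib, ← hre]
      refine Finset.sum_congr rfl fun j _ => ?_
      rw [hB]
      simp only [Sum.elim_inr, Equiv.apply_symm_apply, if_pos hP]
      push_cast
      ring
    have hS1 : ∀ P ∈ S, t P = 1 := by
      intro P hP
      have h1' := hw' (Sum.inl P)
      rw [hBt P] at h1'
      rw [hC] at h1'
      simp only [Sum.elim_inl, if_pos hP] at h1'
      have h2' := hw' (Sum.inr P)
      rw [hBt' P hP] at h2'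
      rw [hC] at h2'
      simp only [Sum.elim_inr] at h2'
      linarith
    have hS2 : ∀ P ∉ S, 1 + δ ≤ t P := by
      intro P hP
      have h1' := hw' (Sum.inl P)
      rw [hBt P] at h1'
      rw [hC] at h1'
      simp only [Sum.elim_inl, if_neg hP] at h1'
      exact h1'
    have ht1 : ∀ P, 1 ≤ t P := by
      intro P
      by_cases h : P ∈ S
      · rw [hS1 P h]
      · linarith [hS2 P h]
    refine ⟨fun P => c ^ (t P), ?_, ?_, ?_, ?_⟩
    · intro P
      constructor
      · exact Real.rpow_pos_of_pos hc _
      · exact Real.rpow_lt_one hc.le hc1 (lt_of_lt_of_le one_pos (ht1 P))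
    · intro P hP
      show c ^ (t P) = c
      rw [hS1 P hP, Real.rpow_one]
    · intro P hP
      show c ^ (t P) ≤ c ^ (1 + δ)
      exact Real.rpow_le_rpow_of_exponent_ge hc hc1.le (hS2 P hP)
    · intro x' hx' hmass
      set x : Ψ → ℝ := fun P => c ^ (t P) with hx
      have hx0 : ∀ P, 0 < x P := fun P => Real.rpow_pos_of_pos hc _
      have hlog : ∀ P, Real.log (x P) = t P * Real.log c := fun P => Real.log_rpow hc _
      have hswap : ∑ P, t P * (x' P - x P) = 0 := by
        calc ∑ P, t P * (x' P - x P)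
            = ∑ P, ∑ m, (pol P m : ℝ) * w' (e m) * (x' P - x P) := by
              refine Finset.sum_congr rfl fun P _ => ?_
              rw [ht]
              rw [Finset.sum_mul]
          _ = ∑ m, ∑ P, (pol P m : ℝ) * w' (e m) * (x' P - x P) := Finset.sum_comm
          _ = ∑ m, w' (e m) * (massVec pol x' m - massVec pol x m) := by
              refine Finset.sum_congr rfl fun m _ => ?_
              unfold massVec
              rw [mul_sub, Finset.mul_sum, Finset.mul_sum, ← Finset.sum_sub_distrib]
              exact Finset.sum_congr rfl fun P _ => by ring
          _ = 0 := by
              rw [hmass]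
              simp
      have hzero : ∑ P, Real.log (x P) * (x' P - x P) = 0 := by
        have : ∀ P, Real.log (x P) * (x' P - x P) = Real.log c * (t P * (x' P - x P)) := by
          intro P
          rw [hlog P]
          ring
        rw [Finset.sum_congr rfl fun P _ => this P, ← Finset.mul_sum, hswap, mul_zero]
      have hpoint : ∀ P, x P * (Real.log (x P) - 1) + Real.log (x P) * (x' P - x P)
          ≤ x' P * (Real.log (x' P) - 1) := by
        intro P
        have ha : 0 < x P := hx0 P
        have hb : 0 < x' P := (hx' P).1
        have hlog2 : Real.log (x P) - Real.log (x' P) ≤ x P / x' P - 1 := by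
          have h := Real.log_le_sub_one_of_pos (div_pos ha hb)
          rwa [Real.log_div (ne_of_gt ha) (ne_of_gt hb)] at h
        have hmul := mul_le_mul_of_nonneg_left hlog2 hb.le
        have hxx : x' P * (x P / x' P - 1) = x P - x' P := by
          field_simp
        rw [hxx] at hmul
        nlinarith [hmul]
      have hgx : gCost (fun P => c ^ (t P))
          = ∑ P, (x P * (Real.log (x P) - 1) + Real.log (x P) * (x' P - x P)) := by
        unfold gCost
        rw [Finset.sum_add_distrib, hzero, add_zero]
      rw [hgx]
      exact le_trans (Finset.sum_le_sum fun P _ => hpoint P) (le_of_eq rfl)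
  · -- infeasible branch: contradiction with stability
    exfalso
    set u : Ψ → ℚ := fun P => y (Sum.inl P) - (if P ∈ S then y (Sum.inr P) else 0) with hu
    have hkerU : ∀ m : Ψ₀, ∑ P, u P * (pol P m : ℚ) = 0 := by
      intro m
      have H := hker (e m)
      rw [Fintype.sum_sum_type] at H
      simp only [hB, Sum.elim_inl, Sum.elim_inr, Equiv.symm_apply_apply] at H
      have hterm : ∀ P : Ψ, u P * (pol P m : ℚ)
          = y (Sum.inl P) * (pol P m : ℚ)
            + y (Sum.inr P) * (if P ∈ S then -(pol P m : ℚ) else 0) := by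
        intro P
        simp only [hu]
        split_ifs with h <;> ring
      rw [Finset.sum_congr rfl fun P _ => hterm P, Finset.sum_add_distrib]
      exact H
    -- clear denominators
    set d : ℕ := ∏ P, (u P).den with hd
    have hdpos : 0 < d := Finset.prod_pos fun P _ => (u P).pos
    have hz : ∀ P : Ψ, ∃ zP : ℤ, (zP : ℚ) = (d : ℚ) * u P := by
      intro P
      refine ⟨(u P).num * ((d / (u P).den : ℕ) : ℤ), ?_⟩
      have hdvd : (u P).den ∣ d := Finset.dvd_prod_of_mem _ (Finset.mem_univ P)
      have hden : (((d / (u P).den : ℕ)) : ℚ) = (d : ℚ) / ((u P).den : ℚ) := by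
        rw [Nat.cast_div hdvd]
        exact_mod_cast (u P).den_nz
      rw [Int.cast_mul, Int.cast_natCast, hden]
      rw [div_eq_mul_inv, ← mul_assoc]
      rw [mul_comm ((u P).num : ℚ) (d : ℚ), mul_assoc, ← div_eq_mul_inv, Rat.num_div_den]
    choose z hzeq using hz
    have hupos : ∀ P ∉ S, 0 ≤ z P := by
      intro P hP
      have h0 : (0 : ℚ) ≤ u P := by
        simp only [hu]
        simp only [if_neg hP, sub_zero]
        exact hy0 (Sum.inl P)
      have : (0 : ℚ) ≤ (z P : ℚ) := by
        rw [hzeq P]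
        positivity
      exact_mod_cast this
    set M₁ : Ψ → ℕ := fun P => if P ∈ S then (-(z P)).toNat else 0 with hM₁
    set M₂ : Ψ → ℕ := fun P => (z P).toNat with hM₂
    have hsupM₁ : supportedOn S M₁ := by
      intro P hP
      rw [hM₁]
      simp [hP]
    have hM₁0 : ∀ P ∉ S, M₁ P = 0 := fun P hP => hsupM₁ P hP
    have hzdiff : ∀ P, (M₂ P : ℤ) - (M₁ P : ℤ) = z P := by
      intro P
      simp only [hM₁, hM₂]
      by_cases h : P ∈ S
      · simp only [if_pos h]
        omega
      · simp only [if_neg h]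
        have := hupos P h
        omega
    have hrec : reconfig pol M₁ M₂ := by
      intro m
      have hQeq : ∑ P, (z P : ℚ) * (pol P m : ℚ) = 0 := by
        have : ∀ P : Ψ, (z P : ℚ) * (pol P m : ℚ) = (d : ℚ) * (u P * (pol P m : ℚ)) := by
          intro P
          rw [hzeq P]
          ring
        rw [Finset.sum_congr rfl fun P _ => this P, ← Finset.mul_sum, hkerU m, mul_zero]
      have hZeq : ∑ P, z P * (pol P m : ℤ) = 0 := by exact_mod_cast hQeq
      have hsub : ∑ P, ((M₂ P : ℤ) - (M₁ P : ℤ)) * (pol P m : ℤ) = 0 := by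
        rw [Finset.sum_congr rfl fun P _ => by rw [hzdiff P]]
        exact hZeq
      have : ∑ P, (M₁ P : ℤ) * (pol P m : ℤ) = ∑ P, (M₂ P : ℤ) * (pol P m : ℤ) := by
        have hexp : ∀ P : Ψ, ((M₂ P : ℤ) - (M₁ P : ℤ)) * (pol P m : ℤ)
            = (M₂ P : ℤ) * (pol P m : ℤ) - (M₁ P : ℤ) * (pol P m : ℤ) := fun P => by ring
        rw [Finset.sum_congr rfl fun P _ => hexp P, Finset.sum_sub_distrib] at hsub
        linarith
      exact_mod_cast this
    -- the objective inequality
    have hO : 0 < (∑ P, (y (Sum.inl P) : ℝ) * (if P ∈ S then 1 else 1 + δ))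
        + ∑ P, (y (Sum.inr P) : ℝ) * (-1) := by
      have H := hobj
      rw [Fintype.sum_sum_type] at H
      simp only [hC, Sum.elim_inl, Sum.elim_inr] at H
      exact H
    have hR : 0 < ∑ P, (u P : ℝ) * (if P ∈ S then 1 else 1 + δ) := by
      have hexp : ∀ P : Ψ, (u P : ℝ) * (if P ∈ S then 1 else 1 + δ)
          = (y (Sum.inl P) : ℝ) * (if P ∈ S then 1 else 1 + δ)
            - (if P ∈ S then (y (Sum.inr P) : ℝ) else 0) := by
        intro P
        simp only [hu]
        push_cast [apply_ite (Rat.cast : ℚ → ℝ)]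
        split_ifs <;> ring
      rw [Finset.sum_congr rfl fun P _ => hexp P, Finset.sum_sub_distrib]
      have hle : ∑ P, (if P ∈ S then (y (Sum.inr P) : ℝ) else 0)
          ≤ ∑ P, (y (Sum.inr P) : ℝ) := by
        refine Finset.sum_le_sum fun P _ => ?_
        split_ifs
        · exact le_rfl
        · exact_mod_cast hy0 (Sum.inr P)
      have hneg : ∑ P, (y (Sum.inr P) : ℝ) * (-1) = - ∑ P, (y (Sum.inr P) : ℝ) := by
        rw [← Finset.sum_neg_distrib]
        exact Finset.sum_congr rfl fun P _ => by ring
      rw [hneg] at hO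
      linarith
    have hRz : 0 < ∑ P, (z P : ℝ) * (if P ∈ S then 1 else 1 + δ) := by
      have hcast : ∀ P : Ψ, (z P : ℝ) = (d : ℝ) * (u P : ℝ) := by
        intro P
        have := hzeq P
        have h2' : ((z P : ℚ) : ℝ) = (((d : ℚ) * u P : ℚ) : ℝ) := by rw [this]
        push_cast at h2'
        exact_mod_cast h2'
      have : ∀ P : Ψ, (z P : ℝ) * (if P ∈ S then 1 else 1 + δ)
          = (d : ℝ) * ((u P : ℝ) * (if P ∈ S then 1 else 1 + δ)) := by
        intro P
        rw [hcast P]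
        ring
      rw [Finset.sum_congr rfl fun P _ => this P, ← Finset.mul_sum]
      have hd' : (0 : ℝ) < (d : ℝ) := by exact_mod_cast hdpos
      exact mul_pos hd' hR
    set l : ℕ := novelty S M₂ with hl
    have hlval : (l : ℝ) = ∑ P, (if P ∈ S then 0 else (M₂ P : ℝ)) := by
      rw [hl]
      unfold novelty
      push_cast
      refine Finset.sum_congr rfl fun P _ => ?_
      rw [Set.indicator_apply]
      by_cases h : P ∈ S
      · rw [if_neg (fun hc' => (Set.mem_compl_iff _ _ |>.1 hc') h), if_pos h]
        exact Nat.cast_zero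
      · rw [if_pos (Set.mem_compl_iff _ _ |>.2 h), if_neg h]
    have hfinal : 0 < ((∑ P, (M₂ P : ℝ)) - ∑ P, (M₁ P : ℝ)) + δ * (l : ℝ) := by
      have e1 : ∀ P : Ψ, (z P : ℝ) * (if P ∈ S then 1 else 1 + δ)
          = ((M₂ P : ℝ) - (M₁ P : ℝ)) + δ * (if P ∈ S then 0 else (M₂ P : ℝ)) := by
        intro P
        have hz' : (z P : ℝ) = (M₂ P : ℝ) - (M₁ P : ℝ) := by
          exact_mod_cast congrArg (Int.cast : ℤ → ℝ) (hzdiff P).symm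
        by_cases h : P ∈ S
        · rw [if_pos h, if_pos h, hz']
          ring
        · rw [if_neg h, if_neg h, hz', hM₁0 P h]
          push_cast
          ring
      rw [Finset.sum_congr rfl fun P _ => e1 P, Finset.sum_add_distrib] at hRz
      rw [Finset.sum_sub_distrib, ← Finset.mul_sum, ← hlval] at hRz
      exact hRz
    by_cases hlz : l = 0
    · rw [hlz] at hfinal
      have hle := h1 M₁ M₂ hsupM₁ hrec
      have : ((∑ P, M₂ P : ℕ) : ℝ) ≤ ((∑ P, M₁ P : ℕ) : ℝ) := by exact_mod_cast hle
      push_cast at this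
      simp only [Nat.cast_zero, mul_zero, add_zero] at hfinal
      linarith
    · have hmem : ((∑ P, (M₁ P : ℝ)) - ∑ P, (M₂ P : ℝ)) / ((novelty S M₂ : ℕ) : ℝ) ∈ Q := by
        rw [hQdef]
        exact ⟨M₁, M₂, hsupM₁, hrec, hlz, rfl⟩
      have hδle := csInf_le hbdd hmem
      have hl0 : (0 : ℝ) < (l : ℝ) := by exact_mod_cast Nat.pos_of_ne_zero hlz
      have hql : (((∑ P, (M₁ P : ℝ)) - ∑ P, (M₂ P : ℝ)) / (l : ℝ)) * (l : ℝ)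
          = (∑ P, (M₁ P : ℝ)) - ∑ P, (M₂ P : ℝ) := div_mul_cancel₀ _ (ne_of_gt hl0)
      have : δ * (l : ℝ) ≤ (((∑ P, (M₁ P : ℝ)) - ∑ P, (M₂ P : ℝ)) / (l : ℝ)) * (l : ℝ) := by
        refine mul_le_mul_of_nonneg_right ?_ hl0.le
        rw [hδ]
        exact hδle
      rw [hql] at this
      linarith
end

section
/- For all real numbers c and y with 0 < c ≤ 0.0064 and 0 < y ≤ c/4 (so that c − 2y > 0 and 2c + 2y > 0), writing log_c z = (ln z)/(ln c), it holds that log_c(2c + 2y) − (1/2)·log_c(c − 2y) ≥ 1/4. Consequently, for every positive real n, n·log_c(2c + 2y) − (n/2)·log_c(c − 2y) ≥ n/4. -/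
/-- imbalance bound for the translator cascade: for `0 < c ≤ 0.0064` and
`0 < y ≤ c/4`, writing `log_c z = (ln z)/(ln c)`, we have
`log_c(2c + 2y) - (1/2)·log_c(c - 2y) ≥ 1/4`; consequently, for every positive real `n`,
`n·log_c(2c + 2y) - (n/2)·log_c(c - 2y) ≥ n/4`. -/
theorem translator_imbalance_bound (c y : ℝ) (hc0 : 0 < c) (hc : c ≤ 0.0064)
    (hy0 : 0 < y) (hy : y ≤ c / 4) :
    Real.log (2 * c + 2 * y) / Real.log c -
        (1 / 2) * (Real.log (c - 2 * y) / Real.log c) ≥ 1 / 4 ∧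
    ∀ n : ℝ, 0 < n →
      n * (Real.log (2 * c + 2 * y) / Real.log c) -
          (n / 2) * (Real.log (c - 2 * y) / Real.log c) ≥ n / 4 := by
  have hc1 : c < 1 := by nlinarith
  have hL : Real.log c < 0 := Real.log_neg hc0 hc1
  have hcy : 0 < c - 2 * y := by nlinarith
  have h1 : Real.log (2 * c + 2 * y) ≤ Real.log (5 / 2) + Real.log c := by
    rw [← Real.log_mul (by norm_num) (ne_of_gt hc0)]
    exact Real.log_le_log (by linarith) (by nlinarith)
  have h2 : Real.log c - Real.log 2 ≤ Real.log (c - 2 * y) := by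
    rw [← Real.log_div (ne_of_gt hc0) (by norm_num)]
    exact Real.log_le_log (by positivity) (by nlinarith)
  have h3 : Real.log (156.25 : ℝ) ≤ - Real.log c := by
    rw [← Real.log_inv]
    refine Real.log_le_log (by norm_num) ?_
    rw [le_inv_comm₀ (by norm_num) hc0]
    calc c ≤ 0.0064 := hc
      _ = (156.25 : ℝ)⁻¹ := by norm_num
  have h4 : Real.log (156.25 : ℝ) = 4 * Real.log (5 / 2) + 2 * Real.log 2 := by
    rw [show (156.25 : ℝ) = (5 / 2) ^ 4 * 2 ^ 2 by norm_num,
      Real.log_mul (by positivity) (by positivity), Real.log_pow, Real.log_pow]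
    push_cast; ring
  have key : Real.log (2 * c + 2 * y) - (1 / 2) * Real.log (c - 2 * y) ≤
      (1 / 4) * Real.log c := by linarith
  have hmain : Real.log (2 * c + 2 * y) / Real.log c -
      (1 / 2) * (Real.log (c - 2 * y) / Real.log c) ≥ 1 / 4 := by
    rw [ge_iff_le, show Real.log (2 * c + 2 * y) / Real.log c -
        (1 / 2) * (Real.log (c - 2 * y) / Real.log c)
        = (Real.log (2 * c + 2 * y) - (1 / 2) * Real.log (c - 2 * y)) / Real.log c by ring,
      le_div_iff_of_neg hL]
    linarith
  refine ⟨hmain, fun n hn => ?_⟩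
  nlinarith [mul_le_mul_of_nonneg_left hmain hn.le]
end
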